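/- arXiv:2310.06250 — 9 statements merged into one kernel-verified Lean document; each statement's English description precedes it below -/
import Mathlib

section
/- With J as above, the function c ↦ Λ(λ(c), c) = ∫ J(y) e^{λ(c) y} dy − 1 − c λ(c) (where λ(c) is the minimizer of Λ(·, c) on (0, ∞)) is continuously differentiable on (0, ∞) with derivative d/dc Λ(λ(c), c) = −λ(c) < 0; hence c ↦ Λ(λ(c), c) is strictly decreasing. -/
/-!
Write `M l = ∫ J y * exp (l * y)`, the moment generating function of the measure `J y dy`. Its
derivative `M' l = ∫ J y * exp (l * y) * y` is strictly increasing (the second moment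
`∫ J y * exp (l * y) * y ^ 2` is positive), so `λ c`, the inverse of `M'`, is continuous and
minimises the convex function `l ↦ M l - c * l` on `l > 0`. Hence `V c = M (λ c) - 1 - c * λ c`
is a minimum of functions affine in `c`: comparing the minimisers at `c` and `c₀` squeezes
`V c - V c₀` between `-(c - c₀) * λ c` and `-(c - c₀) * λ c₀` (the envelope theorem), and the
continuity of `λ` gives `V' = -λ`.
-/

open MeasureTheory Filter Set Topology Asymptotics ProbabilityTheory Real

lemma isMinOn_sub_mul_of_monotoneOn {G G' : ℝ → ℝ} {S : Set ℝ} (hS : Convex ℝ S)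
    (hG : ∀ l ∈ S, HasDerivAt G (G' l) l) (hG' : MonotoneOn G' S) {l : ℝ} (hl : l ∈ S) :
    IsMinOn (fun m => G m - G' l * m) S l := by
  have mvt : ∀ {a b}, a ∈ S → b ∈ S → a < b →
      ∃ ξ ∈ S, a ≤ ξ ∧ ξ ≤ b ∧ G b - G a = G' ξ * (b - a) := by
    intro a b ha hb hab
    have hIcc : Icc a b ⊆ S := hS.ordConnected.out ha hb
    obtain ⟨ξ, hξ, heq⟩ := exists_hasDerivAt_eq_slope G G' hab
      (fun x hx => (hG x (hIcc hx)).continuousAt.continuousWithinAt)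
      (fun x hx => hG x (hIcc (Ioo_subset_Icc_self hx)))
    refine ⟨ξ, hIcc (Ioo_subset_Icc_self hξ), hξ.1.le, hξ.2.le, ?_⟩
    rw [heq, div_mul_cancel₀ _ (sub_ne_zero.2 hab.ne')]
  intro m hm
  show G l - G' l * l ≤ G m - G' l * m
  rcases lt_trichotomy m l with h | rfl | h
  · obtain ⟨ξ, hξS, -, hξl, heq⟩ := mvt hm hl h
    nlinarith [hG' hξS hl hξl]
  · exact le_rfl
  · obtain ⟨ξ, hξS, hlξ, -, heq⟩ := mvt hl hm h
    nlinarith [hG' hl hξS hlξ]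

lemma hasDerivAt_sub_mul_of_isMinOn {G lam : ℝ → ℝ} {S : Set ℝ} {c₀ : ℝ}
    (hlam : ∀ᶠ c in 𝓝 c₀, lam c ∈ S)
    (hmin : ∀ᶠ c in 𝓝 c₀, IsMinOn (fun l => G l - c * l) S (lam c))
    (hcont : ContinuousAt lam c₀) :
    HasDerivAt (fun c => G (lam c) - c * lam c) (-lam c₀) c₀ := by
  rw [hasDerivAt_iff_isLittleO]
  have hsmall : (fun c => (lam c - lam c₀) * (c - c₀)) =o[𝓝 c₀] fun c => c - c₀ := by
    have h := (isLittleO_one_iff ℝ).2 (tendsto_sub_nhds_zero_iff.2 hcont)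
    simpa using h.mul_isBigO (isBigO_refl (fun c => c - c₀) _)
  refine IsBigO.trans_isLittleO (IsBigO.of_bound 1 ?_) hsmall
  filter_upwards [hlam, hmin] with c hc hminc
  have h₁ : G (lam c) - c * lam c ≤ G (lam c₀) - c * lam c₀ := hminc hlam.self_of_nhds
  have h₀ : G (lam c₀) - c₀ * lam c₀ ≤ G (lam c) - c₀ * lam c := hmin.self_of_nhds hc
  rw [Real.norm_eq_abs, Real.norm_eq_abs, one_mul, smul_eq_mul, abs_le]
  have := neg_abs_le ((lam c - lam c₀) * (c - c₀))
  have := le_abs_self ((lam c - lam c₀) * (c - c₀))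
  constructor <;> nlinarith

lemma StrictMonoOn.continuousAt_of_rightInvOn {α β : Type*} [LinearOrder α] [TopologicalSpace α]
    [OrderTopology α] [DenselyOrdered α] [LinearOrder β] [TopologicalSpace β] [OrderTopology β]
    {f : α → β} {g : β → α} {S : Set α} {U : Set β} (hf : StrictMonoOn f S) (hS : IsOpen S)
    (hgS : MapsTo g U S) (hfg : RightInvOn g f U) (hU : IsOpen U) {c₀ : β} (hc₀ : c₀ ∈ U) :
    ContinuousAt g c₀ := by
  have hSnhds : S ∈ 𝓝 (g c₀) := hS.mem_nhds (hgS hc₀)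
  refine tendsto_order.2 ⟨fun a ha => ?_, fun b hb => ?_⟩
  · obtain ⟨l, hl, hlS⟩ := exists_Ioc_subset_of_mem_nhds hSnhds ⟨a, ha⟩
    obtain ⟨a', ha', hag⟩ := exists_between (max_lt ha hl)
    have ha'S : a' ∈ S := hlS ⟨(le_max_right a l).trans_lt ha', hag.le⟩
    have hfa' : f a' < c₀ := hfg hc₀ ▸ hf ha'S (hgS hc₀) hag
    filter_upwards [hU.mem_nhds hc₀, lt_mem_nhds hfa'] with c hcU hc
    rw [← hfg hcU] at hc
    exact (le_max_left a l).trans_lt (ha'.trans ((hf.lt_iff_lt ha'S (hgS hcU)).1 hc))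
  · obtain ⟨u, hu, huS⟩ := exists_Ico_subset_of_mem_nhds hSnhds ⟨b, hb⟩
    obtain ⟨b', hgb, hb'⟩ := exists_between (lt_min hb hu)
    have hb'S : b' ∈ S := huS ⟨hgb.le, hb'.trans_le (min_le_right b u)⟩
    have hfb' : c₀ < f b' := hfg hc₀ ▸ hf (hgS hc₀) hb'S hgb
    filter_upwards [hU.mem_nhds hc₀, gt_mem_nhds hfb'] with c hcU hc
    rw [← hfg hcU] at hc
    exact ((hf.lt_iff_lt (hgS hcU) hb'S).1 hc).trans (hb'.trans_le (min_le_left b u))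

lemma strictMonoOn_integral_mul_exp_mul {μ : Measure ℝ} (hμ : μ {0}ᶜ ≠ 0) :
    StrictMonoOn (fun t => ∫ y, y * exp (t * y) ∂μ) (interior (integrableExpSet id μ)) := by
  have hderiv : ∀ t ∈ interior (integrableExpSet id μ),
      HasDerivAt (fun t => ∫ y, y * exp (t * y) ∂μ) (∫ y, y ^ 2 * exp (t * y) ∂μ) t := fun t ht => by
    simpa using hasDerivAt_integral_pow_mul_exp_real (X := id) ht 1
  refine strictMonoOn_of_hasDerivWithinAt_pos convex_integrableExpSet.interior
    (fun t ht => (hderiv t ht).continuousAt.continuousWithinAt)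
    (fun t ht => (hderiv t (interior_subset ht)).hasDerivWithinAt) fun t ht => ?_
  rw [interior_interior] at ht
  rw [integral_pos_iff_support_of_nonneg (fun y => by positivity)
    (by simpa using integrable_pow_mul_exp_of_mem_interior_integrableExpSet (X := id) ht 2)]
  convert pos_iff_ne_zero.2 hμ
  ext y
  simp

section density

variable {J : ℝ → ℝ}

lemma integral_withDensity_ofReal (hJc : Continuous J) (hJnn : ∀ x, 0 ≤ J x) (g : ℝ → ℝ) :
    ∫ y, g y ∂volume.withDensity (fun y => ENNReal.ofReal (J y)) = ∫ y, J y * g y := by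
  rw [integral_withDensity_eq_integral_toReal_smul hJc.measurable.ennreal_ofReal
    (.of_forall fun _ => ENNReal.ofReal_lt_top)]
  simp [ENNReal.toReal_ofReal (hJnn _)]

lemma integrable_withDensity_ofReal_iff (hJc : Continuous J) (hJnn : ∀ x, 0 ≤ J x) (g : ℝ → ℝ) :
    Integrable g (volume.withDensity fun y => ENNReal.ofReal (J y)) ↔
      Integrable fun y => J y * g y := by
  rw [integrable_withDensity_iff_integrable_smul' hJc.measurable.ennreal_ofReal
    (.of_forall fun _ => ENNReal.ofReal_lt_top)]
  simp [ENNReal.toReal_ofReal (hJnn _)]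

lemma withDensity_ofReal_compl_singleton_ne_zero (hJc : Continuous J) (hJnn : ∀ x, 0 ≤ J x)
    (hJ : ¬ J =ᵐ[volume] 0) (a : ℝ) :
    volume.withDensity (fun y => ENNReal.ofReal (J y)) {a}ᶜ ≠ 0 := by
  rw [withDensity_apply _ (measurableSet_singleton a).compl, restrict_compl_singleton,
    Ne, lintegral_eq_zero_iff hJc.measurable.ennreal_ofReal]
  refine fun h => hJ ?_
  filter_upwards [h] with y hy
  exact le_antisymm (ENNReal.ofReal_eq_zero.1 hy) (hJnn y)

lemma Ioi_subset_interior_integrableExpSet_withDensity (hJc : Continuous J) (hJnn : ∀ x, 0 ≤ J x)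
    (hJexp : ∀ l : ℝ, 0 < l → Integrable (fun x => J x * exp (l * x))) :
    Ioi 0 ⊆ interior (integrableExpSet id (volume.withDensity fun y => ENNReal.ofReal (J y))) :=
  interior_maximal (fun l hl => (integrable_withDensity_ofReal_iff hJc hJnn _).2 (hJexp l hl))
    isOpen_Ioi

lemma hasDerivAt_integral_density_mul_exp (hJc : Continuous J) (hJnn : ∀ x, 0 ≤ J x)
    (hJexp : ∀ l : ℝ, 0 < l → Integrable (fun x => J x * exp (l * x))) {l : ℝ} (hl : 0 < l) :
    HasDerivAt (fun t => ∫ y, J y * exp (t * y)) (∫ y, J y * exp (l * y) * y) l := by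
  have h := hasDerivAt_mgf (Ioi_subset_interior_integrableExpSet_withDensity hJc hJnn hJexp hl)
  have hmgf : mgf id (volume.withDensity fun y => ENNReal.ofReal (J y)) =
      fun t => ∫ y, J y * exp (t * y) :=
    funext fun t => integral_withDensity_ofReal hJc hJnn fun y => exp (t * y)
  rw [hmgf, integral_withDensity_ofReal hJc hJnn] at h
  simpa only [id, mul_comm _ (exp _), ← mul_assoc] using h

lemma strictMonoOn_integral_density_mul_exp_mul (hJc : Continuous J) (hJnn : ∀ x, 0 ≤ J x)
    (hJ : ¬ J =ᵐ[volume] 0) (hJexp : ∀ l : ℝ, 0 < l → Integrable (fun x => J x * exp (l * x))) :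
    StrictMonoOn (fun t => ∫ y, J y * exp (t * y) * y) (Ioi 0) := by
  have h := (strictMonoOn_integral_mul_exp_mul
    (withDensity_ofReal_compl_singleton_ne_zero hJc hJnn hJ 0)).mono
    (Ioi_subset_interior_integrableExpSet_withDensity hJc hJnn hJexp)
  simp only [integral_withDensity_ofReal hJc hJnn] at h
  simpa only [mul_comm _ (exp _), ← mul_assoc] using h

end density

theorem stmt_2_general (J : ℝ → ℝ) (hJc : Continuous J) (hJnn : ∀ x, 0 ≤ J x)
    (hJint : ∫ x, J x = 1)
    (hJexp : ∀ l : ℝ, 0 < l → Integrable (fun x => J x * Real.exp (l * x)))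
    (lamf : ℝ → ℝ) (hlamf : ∀ c : ℝ, 0 < c → 0 < lamf c ∧
      (∫ y, J y * Real.exp (lamf c * y) * y) = c) :
    (∀ c : ℝ, 0 < c →
      HasDerivAt (fun c' : ℝ => (∫ y, J y * Real.exp (lamf c' * y)) - 1 - c' * lamf c')
        (-(lamf c)) c ∧ -(lamf c) < 0) ∧
    ContinuousOn (fun c' : ℝ => -(lamf c')) (Set.Ioi 0) ∧
    StrictAntiOn (fun c' : ℝ => (∫ y, J y * Real.exp (lamf c' * y)) - 1 - c' * lamf c')
      (Set.Ioi 0) := by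
  set G : ℝ → ℝ := fun l => (∫ y, J y * exp (l * y)) - 1
  set G' : ℝ → ℝ := fun l => ∫ y, J y * exp (l * y) * y
  have hG : ∀ l ∈ Ioi (0 : ℝ), HasDerivAt G (G' l) l := fun l hl =>
    (hasDerivAt_integral_density_mul_exp hJc hJnn hJexp hl).sub_const 1
  have hJ : ¬ J =ᵐ[volume] 0 := fun h => by simp [integral_congr_ae h] at hJint
  have hG' : StrictMonoOn G' (Ioi 0) := strictMonoOn_integral_density_mul_exp_mul hJc hJnn hJ hJexp
  have hlam : MapsTo lamf (Ioi 0) (Ioi 0) := fun c hc => (hlamf c hc).1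
  have hinv : RightInvOn lamf G' (Ioi 0) := fun c hc => (hlamf c hc).2
  have hcont : ∀ c ∈ Ioi (0 : ℝ), ContinuousAt lamf c := fun c hc =>
    hG'.continuousAt_of_rightInvOn isOpen_Ioi hlam hinv isOpen_Ioi hc
  have hmin : ∀ c ∈ Ioi (0 : ℝ), IsMinOn (fun l => G l - c * l) (Ioi 0) (lamf c) := fun c hc => by
    simpa only [hinv hc] using
      isMinOn_sub_mul_of_monotoneOn (convex_Ioi 0) hG hG'.monotoneOn (hlam hc)
  have hder : ∀ c ∈ Ioi (0 : ℝ), HasDerivAt (fun c => G (lamf c) - c * lamf c) (-lamf c) c :=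
    fun c hc => hasDerivAt_sub_mul_of_isMinOn ((isOpen_Ioi.eventually_mem hc).mono hlam)
      ((isOpen_Ioi.eventually_mem hc).mono hmin) (hcont c hc)
  refine ⟨fun c hc => ⟨hder c hc, neg_neg_iff_pos.2 (hlam hc)⟩,
    fun c hc => (hcont c hc).neg.continuousWithinAt, ?_⟩
  refine strictAntiOn_of_hasDerivWithinAt_neg (f' := fun c => -lamf c) (convex_Ioi 0)
    (fun c hc => (hder c hc).continuousAt.continuousWithinAt) (fun c hc => ?_) fun c hc => ?_
  all_goals rw [interior_Ioi] at hc
  · exact (hder c hc).hasDerivWithinAt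
  · exact neg_neg_iff_pos.2 (hlam hc)

theorem stmt_2 (J : ℝ → ℝ) (hJc : Continuous J) (hJnn : ∀ x, 0 ≤ J x)
    (hJsym : ∀ x, J (-x) = J x) (hJint : ∫ x, J x = 1)
    (hJexp : ∀ l : ℝ, 0 < l → Integrable (fun x => J x * Real.exp (l * x)))
    (lamf : ℝ → ℝ) (hlamf : ∀ c : ℝ, 0 < c → 0 < lamf c ∧
      (∫ y, J y * Real.exp (lamf c * y) * y) = c) :
    (∀ c : ℝ, 0 < c →
      HasDerivAt (fun c' : ℝ => (∫ y, J y * Real.exp (lamf c' * y)) - 1 - c' * lamf c')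
        (-(lamf c)) c ∧ -(lamf c) < 0) ∧
    ContinuousOn (fun c' : ℝ => -(lamf c')) (Set.Ioi 0) ∧
    StrictAntiOn (fun c' : ℝ => (∫ y, J y * Real.exp (lamf c' * y)) - 1 - c' * lamf c')
      (Set.Ioi 0) :=
  stmt_2_general J hJc hJnn hJint hJexp lamf hlamf
end

section
/- With J as above, the minimum value Λ(λ(c), c) tends to −∞ as c → ∞. More precisely, ∫_ℝ J(y) e^{λ(c) y} dy − c λ(c) = ∫_0^∞ J(y) e^{λ(c) y} (1 − λ(c) y) dy + ∫_0^∞ J(y) e^{−λ(c) y} (1 + λ(c) y) dy → −∞ as c → ∞. -/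
open MeasureTheory Filter Set Topology

/-!
Write `λ = λ(c)`. The constraint `∫ J e^{λy} y = c` turns `∫ J e^{λy} - cλ` into
`∫ J e^{λy} (1 - λy)`, and folding the negative half-line onto the positive one by evenness of `J`
gives the identity. Since `∫ J e^{λy} y ≤ ∫ J e^{(M+1)y}` whenever `λ ≤ M`, we get `λ(c) → ∞`.
As `e^t (1 - t) ≤ 1`, the integrand is at most `J` off an interval `[a, b] ⊆ (0, ∞)` on which
`J ≥ m > 0`, while on `[a, b]`, once `λa ≥ 2`, it is at most `-m e^{λa}`. Hence the integral is at
most `1 - (b - a) m e^{λa} → -∞`.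
-/

lemma exp_mul_one_sub_le_one (t : ℝ) : Real.exp t * (1 - t) ≤ 1 := by
  calc Real.exp t * (1 - t) ≤ Real.exp t * Real.exp (-t) := by
        gcongr; linarith [Real.add_one_le_exp (-t)]
    _ = 1 := by rw [← Real.exp_add, add_neg_cancel, Real.exp_zero]

lemma exp_mul_mul_le_exp_add_one_mul {l M : ℝ} (hlM : l ≤ M) (y : ℝ) :
    Real.exp (l * y) * y ≤ Real.exp ((M + 1) * y) := by
  rcases le_or_gt y 0 with hy | hy
  · exact (mul_nonpos_of_nonneg_of_nonpos (Real.exp_pos _).le hy).trans (Real.exp_pos _).le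
  · calc Real.exp (l * y) * y ≤ Real.exp (M * y) * Real.exp y := by
          gcongr
          linarith [Real.add_one_le_exp y]
      _ = Real.exp ((M + 1) * y) := by rw [← Real.exp_add]; ring_nf

lemma abs_mul_exp_mul_le {l : ℝ} (hl : 0 < l) (y : ℝ) :
    |y| * Real.exp (l * y) ≤ 2 / l * (Real.exp (3 * l / 2 * y) + Real.exp (l / 2 * y)) := by
  have h := (Real.add_one_le_exp |l / 2 * y|).trans (Real.exp_abs_le (l / 2 * y))
  rw [abs_mul, abs_of_pos (half_pos hl)] at h
  calc |y| * Real.exp (l * y)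
      = 2 / l * (l / 2 * |y|) * Real.exp (l * y) := by field_simp
    _ ≤ 2 / l * (Real.exp (l / 2 * y) + Real.exp (-(l / 2 * y))) * Real.exp (l * y) := by
        gcongr; linarith
    _ = 2 / l * (Real.exp (3 * l / 2 * y) + Real.exp (l / 2 * y)) := by
        rw [mul_assoc, add_mul, ← Real.exp_add, ← Real.exp_add]; ring_nf

lemma integral_eq_integral_Ioi_add_integral_Ioi_comp_neg {g : ℝ → ℝ} (hg : Integrable g) :
    ∫ y, g y = (∫ y in Ioi 0, g y) + ∫ y in Ioi 0, g (-y) := by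
  rw [← intervalIntegral.integral_Iic_add_Ioi hg.integrableOn hg.integrableOn,
    integral_comp_neg_Ioi, neg_zero, add_comm]

lemma exists_Icc_pos_le_of_even {J : ℝ → ℝ} (hJc : Continuous J) (hJsym : ∀ x, J (-x) = J x)
    {x : ℝ} (hx : 0 < J x) : ∃ a b m, 0 < a ∧ a < b ∧ 0 < m ∧ ∀ y ∈ Icc a b, m ≤ J y := by
  obtain ⟨y, hyJ, hy0⟩ := (dense_compl_singleton (0 : ℝ)).inter_open_nonempty _
    (isOpen_lt continuous_const hJc) ⟨x, hx⟩
  have hp : 0 < |y| := abs_pos.2 hy0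
  have hJp : 0 < J |y| := by
    rcases abs_cases y with ⟨h, -⟩ | ⟨h, -⟩ <;> rw [h]
    exacts [hyJ, (hJsym y).symm ▸ hyJ]
  have hnhds : {z | J |y| / 2 < J z} ∩ Ioi 0 ∈ 𝓝 |y| :=
    inter_mem (hJc.continuousAt.eventually (lt_mem_nhds (half_lt_self hJp))) (Ioi_mem_nhds hp)
  obtain ⟨ε, hε, hball⟩ := Metric.mem_nhds_iff.1 hnhds
  have hIcc : Icc (|y| - ε / 2) (|y| + ε / 2) ⊆ {z | J |y| / 2 < J z} ∩ Ioi 0 := by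
    rw [← Real.closedBall_eq_Icc]
    exact (Metric.closedBall_subset_ball (half_lt_self hε)).trans hball
  refine ⟨_, _, J |y| / 2, (hIcc ⟨le_rfl, by linarith⟩).2, by linarith, half_pos hJp,
    fun z hz => (hIcc hz).1.le⟩

lemma tendsto_atTop_of_le_imp_le {f K : ℝ → ℝ} (h : ∀ c, 0 < c → ∀ M, f c ≤ M → c ≤ K M) :
    Tendsto f atTop atTop := by
  refine tendsto_atTop.2 fun M => ?_
  filter_upwards [eventually_gt_atTop (max (K M) 0)] with c hc
  by_contra! hlt
  exact (h c ((le_max_right _ _).trans_lt hc) M hlt.le).not_gt ((le_max_left _ _).trans_lt hc)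

lemma integral_mul_exp_mul_mul_one_sub_le {J : ℝ → ℝ} (hJnn : ∀ x, 0 ≤ J x) (hJ : Integrable J)
    {l a b m : ℝ} (hl : 0 ≤ l) (hab : a ≤ b) (hla : 2 ≤ l * a) (hJm : ∀ y ∈ Icc a b, m ≤ J y)
    (hf : Integrable (fun y => J y * Real.exp (l * y) * (1 - l * y))) :
    ∫ y, J y * Real.exp (l * y) * (1 - l * y) ≤ (∫ y, J y) - (b - a) * (m * Real.exp (l * a)) := by
  have hIcc : ∫ y in Icc a b, J y * Real.exp (l * y) * (1 - l * y)
      ≤ (b - a) * -(m * Real.exp (l * a)) := by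
    have hvol : volume.real (Icc a b) = b - a := by
      rw [measureReal_def, Real.volume_Icc, ENNReal.toReal_ofReal (sub_nonneg.2 hab)]
    rw [← hvol, ← smul_eq_mul, ← setIntegral_const]
    refine setIntegral_mono_on hf.integrableOn (integrableOn_const measure_Icc_lt_top.ne)
      measurableSet_Icc fun y ⟨hay, _⟩ => ?_
    have hly : l * a ≤ l * y := mul_le_mul_of_nonneg_left hay hl
    have hlow : m * Real.exp (l * a) ≤ J y * Real.exp (l * y) :=
      mul_le_mul (hJm y ⟨hay, ‹_›⟩) (Real.exp_le_exp.2 hly) (Real.exp_pos _).le (hJnn y)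
    nlinarith [mul_nonneg (hJnn y) (Real.exp_pos (l * y)).le]
  have hcompl : ∫ y in (Icc a b)ᶜ, J y * Real.exp (l * y) * (1 - l * y) ≤ ∫ y, J y :=
    calc ∫ y in (Icc a b)ᶜ, J y * Real.exp (l * y) * (1 - l * y)
        ≤ ∫ y in (Icc a b)ᶜ, J y :=
          setIntegral_mono hf.integrableOn hJ.integrableOn fun y => by
            rw [mul_assoc]
            exact mul_le_of_le_one_right (hJnn y) (exp_mul_one_sub_le_one _)
      _ ≤ ∫ y, J y := setIntegral_le_integral hJ (ae_of_all _ hJnn)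
  linarith [integral_add_compl (s := Icc a b) measurableSet_Icc hf]

section ExponentialMoments

variable {J : ℝ → ℝ} (hJnn : ∀ x, 0 ≤ J x)
  (hJexp : ∀ l : ℝ, 0 < l → Integrable (fun x => J x * Real.exp (l * x)))
include hJnn hJexp

lemma integrable_mul_exp_mul_mul_id {l : ℝ} (hl : 0 < l) :
    Integrable (fun y => J y * Real.exp (l * y) * y) := by
  refine (((hJexp (3 * l / 2) (by positivity)).add (hJexp (l / 2) (half_pos hl))).const_mul
    (2 / l)).mono'
    ((hJexp l hl).aestronglyMeasurable.mul continuous_id.aestronglyMeasurable) ?_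
  filter_upwards with y
  rw [Real.norm_eq_abs, abs_mul, abs_mul, abs_of_nonneg (hJnn y), abs_of_pos (Real.exp_pos _)]
  calc J y * Real.exp (l * y) * |y| = J y * (|y| * Real.exp (l * y)) := by ring
    _ ≤ J y * (2 / l * (Real.exp (3 * l / 2 * y) + Real.exp (l / 2 * y))) :=
        mul_le_mul_of_nonneg_left (abs_mul_exp_mul_le hl y) (hJnn y)
    _ = _ := by simp only [Pi.add_apply]; ring

lemma integrable_mul_exp_mul_mul_one_sub {l : ℝ} (hl : 0 < l) :
    Integrable (fun y => J y * Real.exp (l * y) * (1 - l * y)) :=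
  ((hJexp l hl).sub ((integrable_mul_exp_mul_mul_id hJnn hJexp hl).const_mul l)).congr
    (ae_of_all _ fun y => by simp only [Pi.sub_apply]; ring)

lemma integral_mul_exp_mul_mul_one_sub {l : ℝ} (hl : 0 < l) :
    ∫ y, J y * Real.exp (l * y) * (1 - l * y) =
      (∫ y, J y * Real.exp (l * y)) - l * ∫ y, J y * Real.exp (l * y) * y := by
  rw [← integral_const_mul,
    ← integral_sub (hJexp l hl) ((integrable_mul_exp_mul_mul_id hJnn hJexp hl).const_mul l)]
  congr 1 with y
  ring

lemma integral_mul_exp_mul_mul_id_le {l M : ℝ} (hl : 0 < l) (hlM : l ≤ M) :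
    ∫ y, J y * Real.exp (l * y) * y ≤ ∫ y, J y * Real.exp ((M + 1) * y) :=
  integral_mono (integrable_mul_exp_mul_mul_id hJnn hJexp hl) (hJexp _ (by linarith)) fun y => by
    rw [mul_assoc]
    exact mul_le_mul_of_nonneg_left (exp_mul_mul_le_exp_add_one_mul hlM y) (hJnn y)

lemma tendsto_atTop_of_integral_mul_exp_mul_mul_id_eq {lamf : ℝ → ℝ}
    (hlamf : ∀ c : ℝ, 0 < c → 0 < lamf c ∧ (∫ y, J y * Real.exp (lamf c * y) * y) = c) :
    Tendsto lamf atTop atTop :=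
  tendsto_atTop_of_le_imp_le (K := fun M => ∫ y, J y * Real.exp ((M + 1) * y)) fun c hc _ hM =>
    (hlamf c hc).2 ▸ integral_mul_exp_mul_mul_id_le hJnn hJexp (hlamf c hc).1 hM

end ExponentialMoments

theorem stmt_3 (J : ℝ → ℝ) (hJc : Continuous J) (hJnn : ∀ x, 0 ≤ J x)
    (hJsym : ∀ x, J (-x) = J x) (hJint : ∫ x, J x = 1)
    (hJexp : ∀ l : ℝ, 0 < l → Integrable (fun x => J x * Real.exp (l * x)))
    (lamf : ℝ → ℝ) (hlamf : ∀ c : ℝ, 0 < c → 0 < lamf c ∧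
      (∫ y, J y * Real.exp (lamf c * y) * y) = c) :
    (∀ c : ℝ, 0 < c →
      (∫ y, J y * Real.exp (lamf c * y)) - c * lamf c =
        (∫ y in Set.Ioi (0 : ℝ), J y * Real.exp (lamf c * y) * (1 - lamf c * y)) +
        (∫ y in Set.Ioi (0 : ℝ), J y * Real.exp (-(lamf c) * y) * (1 + lamf c * y))) ∧
    Tendsto (fun c : ℝ => (∫ y, J y * Real.exp (lamf c * y)) - c * lamf c) atTop atBot := by
  have hJ : Integrable J := Integrable.of_integral_ne_zero (by rw [hJint]; exact one_ne_zero)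
  have hΛ : ∀ c, 0 < c → (∫ y, J y * Real.exp (lamf c * y)) - c * lamf c =
      ∫ y, J y * Real.exp (lamf c * y) * (1 - lamf c * y) := fun c hc => by
    rw [integral_mul_exp_mul_mul_one_sub hJnn hJexp (hlamf c hc).1, (hlamf c hc).2, mul_comm]
  refine ⟨fun c hc => ?_, ?_⟩
  · rw [hΛ c hc, integral_eq_integral_Ioi_add_integral_Ioi_comp_neg
      (integrable_mul_exp_mul_mul_one_sub hJnn hJexp (hlamf c hc).1)]
    congr 1
    refine setIntegral_congr_fun measurableSet_Ioi fun y _ => ?_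
    simp only [hJsym, neg_mul, mul_neg, sub_neg_eq_add]
  · obtain ⟨x, hx⟩ : ∃ x, 0 < J x := by
      obtain ⟨x, hx⟩ := exists_ne_zero_of_integral_ne_zero (hJint ▸ one_ne_zero)
      exact ⟨x, (hJnn x).lt_of_ne' hx⟩
    obtain ⟨a, b, m, ha, hab, hm, hJm⟩ := exists_Icc_pos_le_of_even hJc hJsym hx
    have hlam := tendsto_atTop_of_integral_mul_exp_mul_mul_id_eq hJnn hJexp hlamf
    have hbound : Tendsto (fun c => 1 - (b - a) * (m * Real.exp (lamf c * a))) atTop atBot := by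
      have h := ((Real.tendsto_exp_atTop.comp (hlam.atTop_mul_const ha)).const_mul_atTop
        hm).const_mul_atTop (sub_pos.2 hab)
      simpa only [sub_eq_add_neg, Function.comp_def] using
        tendsto_atBot_add_const_left _ 1 (tendsto_neg_atTop_atBot.comp h)
    refine tendsto_atBot_mono' atTop ?_ hbound
    filter_upwards [eventually_gt_atTop 0, hlam.eventually_ge_atTop (2 / a)] with c hc hla
    rw [hΛ c hc]
    refine (integral_mul_exp_mul_mul_one_sub_le hJnn hJ (hlamf c hc).1.le hab.le
      ((div_le_iff₀ ha).1 hla) hJm ?_).trans_eq (by rw [hJint])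
    exact integrable_mul_exp_mul_mul_one_sub hJnn hJexp (hlamf c hc).1
end

section
/- Let s₀ < 0 be fixed. There exists c* > 0 such that the equation ∫_ℝ J(y) e^{λ y} dy − 1 − c λ = s₀ has, with respect to the unknown λ > 0: no positive solution when 0 < c < c*, exactly one positive solution when c = c*, and exactly two positive solutions λ₁ < λ₂ when c > c*. Moreover for c > c* one has 0 < λ₁ < λ(c) < λ₂, where λ(c) is the unique positive root of ∫ J(y) e^{λ y} y dy = c. The critical speed c* is determined by Λ(λ(c*), c*) = s₀. -/
/-!
Write `M λ = ∫ J(y) e^{λy} dy` and `N λ = ∫ J(y) e^{λy} y dy`. Since `J ≥ 0` is continuous and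
positive at `0`, `e^u > 1 + u` for `u ≠ 0` gives the strict supporting-line inequality
`M y > M x + N x (y - x)` for `x ≠ y`, on which the rest of the argument is built, together with
`M 0 = 1` and `N 0 = 0` (evenness). It makes `N` strictly increasing, so `Λ(·, c)` strictly
decreases up to `λ(c)` and strictly increases after it, with minimum `m(c) = Λ(λ(c), c)`. The
function `m` is strictly decreasing and concave (hence continuous) on `(0, ∞)`, is close to `0`
for small `c` and is eventually below `s₀`, so `m(c*) = s₀` for exactly one `c*`. Then
`Λ(·, c) = s₀` has no root when `m(c) > s₀`, only `λ(c*)` when `c = c*`, and, since `Λ(0, c) = 0`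
and `Λ(λ, c) → ∞`, exactly one root on each side of `λ(c)` when `m(c) < s₀`.
-/

open MeasureTheory Filter Set Real

def IsStrictSubgradient (M N : ℝ → ℝ) : Prop :=
  ∀ x y, x ≠ y → M x + N x * (y - x) < M y

/-- The function `Λ(λ, c)` of the paper, with `∫ J(y) e^{λ y} dy` abstracted to `M λ`. -/
def Λ (M : ℝ → ℝ) (l c : ℝ) : ℝ := M l - 1 - c * l

namespace IsStrictSubgradient

variable {M N lam : ℝ → ℝ} {c l₀ s : ℝ}

theorem le (h : IsStrictSubgradient M N) (x y : ℝ) : M x + N x * (y - x) ≤ M y := by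
  rcases eq_or_ne x y with rfl | hxy
  · simp
  · exact (h x y hxy).le

theorem strictMono (h : IsStrictSubgradient M N) : StrictMono N := by
  intro x y hxy
  have hx := h x y hxy.ne
  have hy := h y x hxy.ne'
  nlinarith

theorem convexOn (h : IsStrictSubgradient M N) : ConvexOn ℝ univ M := by
  refine ⟨convex_univ, fun x _ y _ a b ha hb hab => ?_⟩
  obtain rfl : b = 1 - a := by linarith
  have hx := mul_le_mul_of_nonneg_left (h.le (a • x + (1 - a) • y) x) ha
  have hy := mul_le_mul_of_nonneg_left (h.le (a • x + (1 - a) • y) y) hb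
  simp only [smul_eq_mul] at *
  nlinarith

theorem continuous (h : IsStrictSubgradient M N) : Continuous M :=
  continuousOn_univ.mp (h.convexOn.continuousOn isOpen_univ)

theorem continuous_Λ (h : IsStrictSubgradient M N) (c : ℝ) : Continuous (Λ M · c) :=
  (h.continuous.sub continuous_const).sub (continuous_const.mul continuous_id)

theorem Λ_add_mul_le (h : IsStrictSubgradient M N) (x l c : ℝ) :
    Λ M x (N x) + (N x - c) * l ≤ Λ M l c := by
  unfold Λ
  linear_combination h.le x l

theorem Λ_le (h : IsStrictSubgradient M N) (hc : N l₀ = c) (l : ℝ) : Λ M l₀ c ≤ Λ M l c := by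
  simpa [hc] using h.Λ_add_mul_le l₀ l c

theorem Λ_lt_of_ne (h : IsStrictSubgradient M N) (hc : N l₀ = c) {l : ℝ} (hl : l ≠ l₀) :
    Λ M l₀ c < Λ M l c := by
  subst hc
  unfold Λ
  linear_combination h l₀ l hl.symm

theorem strictAntiOn_Λ (h : IsStrictSubgradient M N) (hc : N l₀ = c) :
    StrictAntiOn (Λ M · c) (Iic l₀) := by
  intro x _ y hy hxy
  have hslope : N y ≤ c := hc ▸ h.strictMono.monotone hy
  have hsupport := h y x hxy.ne'
  simp only [Λ]
  nlinarith

theorem strictMonoOn_Λ (h : IsStrictSubgradient M N) (hc : N l₀ = c) :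
    StrictMonoOn (Λ M · c) (Ici l₀) := by
  intro x hx y _ hxy
  have hslope : c ≤ N x := hc ▸ h.strictMono.monotone hx
  have hsupport := h x y hxy.ne
  simp only [Λ]
  nlinarith

theorem tendsto_Λ_atTop (h : IsStrictSubgradient M N) {x : ℝ} (hx : c < N x) :
    Tendsto (Λ M · c) atTop atTop :=
  tendsto_atTop_mono (h.Λ_add_mul_le x · c)
    (tendsto_atTop_add_const_left _ _ (tendsto_id.const_mul_atTop (sub_pos.2 hx)))

theorem exists_two_roots (h : IsStrictSubgradient M N) (hM0 : M 0 = 1) (hl₀ : 0 ≤ l₀)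
    (hc : N l₀ = c) (hs : Λ M l₀ c < s) (hs0 : s < 0) :
    ∃ l₁ l₂, 0 < l₁ ∧ l₁ < l₀ ∧ l₀ < l₂ ∧ Λ M l₁ c = s ∧ Λ M l₂ c = s ∧
      ∀ l, Λ M l c = s → l = l₁ ∨ l = l₂ := by
  have hΛ0 : Λ M 0 c = 0 := by simp [Λ, hM0]
  obtain ⟨l₁, hl₁, hl₁s⟩ :=
    intermediate_value_Icc' hl₀ (h.continuous_Λ c).continuousOn ⟨hs.le, by rw [hΛ0]; exact hs0.le⟩
  obtain ⟨b, hb, hbl₀⟩ := (((h.tendsto_Λ_atTop (hc ▸ h.strictMono (lt_add_one l₀))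
    ).eventually_ge_atTop s).and (eventually_ge_atTop l₀)).exists
  obtain ⟨l₂, hl₂, hl₂s⟩ := intermediate_value_Icc hbl₀ (h.continuous_Λ c).continuousOn ⟨hs.le, hb⟩
  refine ⟨l₁, l₂, hl₁.1.lt_of_ne ?_, hl₁.2.lt_of_ne ?_, hl₂.1.lt_of_ne ?_, hl₁s, hl₂s,
    fun l hl => ?_⟩
  · rintro rfl; linarith
  · rintro rfl; linarith
  · rintro rfl; linarith
  rcases le_total l l₀ with hl' | hl'
  · exact .inl ((h.strictAntiOn_Λ hc).injOn hl' hl₁.2 (hl.trans hl₁s.symm))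
  · exact .inr ((h.strictMonoOn_Λ hc).injOn hl' hl₂.1 (hl.trans hl₂s.symm))

theorem pos_of_slope_pos (h : IsStrictSubgradient M N) (hN0 : N 0 = 0) (hl₀ : 0 < N l₀) :
    0 < l₀ :=
  h.strictMono.lt_iff_lt.1 (by rwa [hN0])

theorem strictAntiOn_Λ_min (h : IsStrictSubgradient M N) (hN0 : N 0 = 0)
    (hlam : ∀ c, 0 < c → N (lam c) = c) : StrictAntiOn (fun c => Λ M (lam c) c) (Ioi 0) := by
  intro c hc c' hc' hcc'
  have hpos := h.pos_of_slope_pos hN0 (by rwa [hlam c hc])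
  calc Λ M (lam c') c' ≤ Λ M (lam c) c' := h.Λ_le (hlam c' hc') _
    _ < Λ M (lam c) c := by simp only [Λ]; nlinarith

/-- `Λ M (lam c) c` is the minimum of `Λ M · c` (see `Λ_le`), an infimum of affine functions
of `c`. -/
theorem concaveOn_Λ_min (h : IsStrictSubgradient M N) (hlam : ∀ c, 0 < c → N (lam c) = c) :
    ConcaveOn ℝ (Ioi 0) (fun c => Λ M (lam c) c) := by
  refine ⟨convex_Ioi 0, fun c hc c' hc' a b ha hb hab => ?_⟩
  obtain rfl : b = 1 - a := by linarith
  have h₁ := mul_le_mul_of_nonneg_left (h.Λ_le (hlam c hc) (lam (a • c + (1 - a) • c'))) ha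
  have h₂ := mul_le_mul_of_nonneg_left (h.Λ_le (hlam c' hc') (lam (a • c + (1 - a) • c'))) hb
  simp only [smul_eq_mul, Λ] at *
  nlinarith

theorem exists_Λ_min_eq (h : IsStrictSubgradient M N) (hM0 : M 0 = 1) (hN0 : N 0 = 0)
    (hlam : ∀ c, 0 < c → N (lam c) = c) (hs : s < 0) : ∃ c, 0 < c ∧ Λ M (lam c) c = s := by
  obtain ⟨ε, hε, hεs⟩ := exists_pos_mul_lt (neg_pos.2 hs) (lam 1)
  set c₁ := min 1 ε
  have hc₁ : 0 < c₁ := lt_min one_pos hε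
  have hlam₁ : lam c₁ ≤ lam 1 := by
    rw [← h.strictMono.le_iff_le, hlam c₁ hc₁, hlam 1 one_pos]; exact min_le_left _ _
  -- `Λ M (lam c) c ≥ -c * lam c ≥ -c * lam 1` for `c ≤ 1`, and `Λ M (lam c) c ≤ M 1 - 1 - c`.
  have hbelow : s ≤ Λ M (lam c₁) c₁ := by
    have hlower := h.Λ_add_mul_le 0 (lam c₁) c₁
    have hprod := mul_le_mul (min_le_right 1 ε) hlam₁
      (h.pos_of_slope_pos hN0 (by rwa [hlam c₁ hc₁])).le hε.le
    simp only [Λ, hM0, hN0] at hlower ⊢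
    nlinarith
  set c₂ := max 1 (M 1 - 1 - s)
  have hc₂ : 0 < c₂ := lt_max_of_lt_left one_pos
  have habove : Λ M (lam c₂) c₂ ≤ s := by
    have hupper := h.Λ_le (hlam c₂ hc₂) 1
    have hc₂_ge := le_max_right 1 (M 1 - 1 - s)
    simp only [Λ] at hupper ⊢
    linarith
  exact isPreconnected_Ioi.intermediate_value hc₂ hc₁
    ((h.concaveOn_Λ_min hlam).continuousOn isOpen_Ioi) ⟨habove, hbelow⟩

end IsStrictSubgradient

theorem exp_abs_add_one_mul_le (l x : ℝ) :
    exp ((|l| + 1) * |x|) ≤ exp ((|l| + 1) * x) + exp (-(|l| + 1) * x) := by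
  have h := exp_abs_le ((|l| + 1) * x)
  rwa [abs_mul, abs_of_pos (by positivity : 0 < |l| + 1), ← neg_mul] at h

theorem exp_mul_le_exp_add_exp_neg (l x : ℝ) :
    exp (l * x) ≤ exp ((|l| + 1) * x) + exp (-(|l| + 1) * x) := by
  refine le_trans (exp_le_exp.2 ?_) (exp_abs_add_one_mul_le l x)
  nlinarith [le_abs_self (l * x), abs_mul l x, abs_nonneg x]

theorem abs_exp_mul_mul_le_exp_add_exp_neg (l x : ℝ) :
    |exp (l * x) * x| ≤ exp ((|l| + 1) * x) + exp (-(|l| + 1) * x) := by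
  refine le_trans ?_ (exp_abs_add_one_mul_le l x)
  rw [abs_mul, abs_of_pos (exp_pos _), add_one_mul, exp_add]
  exact mul_le_mul (exp_le_exp.2 ((le_abs_self _).trans (abs_mul l x).le))
    (by linarith [add_one_le_exp |x|]) (abs_nonneg x) (exp_pos _).le

section Kernel

variable {J : ℝ → ℝ}

theorem integrable_mul_of_abs_le {k : ℝ} (hJm : AEStronglyMeasurable J)
    (hk : Integrable (fun x => J x * exp (k * x))) (hk' : Integrable (fun x => J x * exp (-k * x)))
    {f : ℝ → ℝ} (hf : Continuous f) (hfk : ∀ x, |f x| ≤ exp (k * x) + exp (-k * x)) :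
    Integrable (fun x => J x * f x) := by
  refine (hk.norm.add hk'.norm).mono' (hJm.mul hf.aestronglyMeasurable) (ae_of_all _ fun x => ?_)
  simp only [Pi.add_apply, norm_mul, norm_eq_abs, abs_exp, ← mul_add]
  exact mul_le_mul_of_nonneg_left (hfk x) (abs_nonneg _)

theorem integrable_mul_exp_neg (hJsym : ∀ x, J (-x) = J x) {k : ℝ}
    (hk : Integrable (fun x => J x * exp (k * x))) : Integrable (fun x => J x * exp (-k * x)) := by
  simpa [hJsym] using hk.comp_neg

theorem integrable_mul_exp (hJm : AEStronglyMeasurable J) (hJsym : ∀ x, J (-x) = J x)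
    (hJexp : ∀ l : ℝ, 0 < l → Integrable (fun x => J x * exp (l * x))) (l : ℝ) :
    Integrable (fun x => J x * exp (l * x)) :=
  have hk := hJexp (|l| + 1) (by positivity)
  integrable_mul_of_abs_le hJm hk (integrable_mul_exp_neg hJsym hk) (by fun_prop)
    fun x => (abs_of_pos (exp_pos _)).trans_le (exp_mul_le_exp_add_exp_neg l x)

theorem integrable_mul_exp_mul (hJm : AEStronglyMeasurable J) (hJsym : ∀ x, J (-x) = J x)
    (hJexp : ∀ l : ℝ, 0 < l → Integrable (fun x => J x * exp (l * x))) (l : ℝ) :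
    Integrable (fun x => J x * exp (l * x) * x) := by
  have hk := hJexp (|l| + 1) (by positivity)
  simpa only [mul_assoc] using integrable_mul_of_abs_le hJm hk (integrable_mul_exp_neg hJsym hk)
    (by fun_prop) (abs_exp_mul_mul_le_exp_add_exp_neg l)

theorem integral_mul_self_eq_zero (hJsym : ∀ x, J (-x) = J x) : ∫ x, J x * x = 0 := by
  have h := integral_neg_eq_self (fun x => J x * x) volume
  simp only [hJsym, mul_neg, integral_neg] at h
  linarith

theorem isStrictSubgradient_integral_mul_exp (hJnn : ∀ x, 0 ≤ J x)
    (hsupp : 0 < volume (Function.support J))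
    (hint : ∀ l, Integrable (fun x => J x * exp (l * x)))
    (hint' : ∀ l, Integrable (fun x => J x * exp (l * x) * x)) :
    IsStrictSubgradient (fun l => ∫ t, J t * exp (l * t))
      (fun l => ∫ t, J t * exp (l * t) * t) := by
  intro x y hxy
  set g := fun t => J t * exp (x * t) * (exp ((y - x) * t) - 1 - (y - x) * t)
  have hg : g = fun t =>
      J t * exp (y * t) - J t * exp (x * t) - (y - x) * (J t * exp (x * t) * t) := by
    funext t
    simp only [g]
    rw [show y * t = x * t + (y - x) * t by ring, exp_add]
    ring
  have hgi : Integrable g := hg ▸ ((hint y).sub (hint x)).sub ((hint' x).const_mul _)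
  have hg0 : 0 ≤ g := fun t => mul_nonneg (mul_nonneg (hJnn t) (exp_pos _).le)
    (by linarith [add_one_le_exp ((y - x) * t)])
  have hsupp_g : Function.support J \ {0} ⊆ Function.support g := by
    rintro t ⟨hJt, ht0⟩
    have hexp := add_one_lt_exp (mul_ne_zero (sub_ne_zero.2 hxy.symm) ht0)
    exact (mul_pos (mul_pos ((hJnn t).lt_of_ne' hJt) (exp_pos _)) (by linarith)).ne'
  have hpos : 0 < ∫ t, g t := (integral_pos_iff_support_of_nonneg hg0 hgi).2 <|
    hsupp.trans_le ((measure_sdiff_null (measure_singleton 0)).symm.trans_le (measure_mono hsupp_g))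
  have hint_g : ∫ t, g t = (∫ t, J t * exp (y * t)) - (∫ t, J t * exp (x * t))
      - (y - x) * ∫ t, J t * exp (x * t) * t := by
    simp only [hg]
    rw [integral_sub, integral_sub (hint y) (hint x), integral_const_mul]
    · exact (hint y).sub (hint x)
    · exact (hint' x).const_mul _
  beta_reduce
  linarith

end Kernel

theorem stmt_4 (J : ℝ → ℝ) (hJc : Continuous J) (hJnn : ∀ x, 0 ≤ J x)
    (hJsym : ∀ x, J (-x) = J x) (hJint : ∫ x, J x = 1) (hJ0 : 0 < J 0)
    (hJexp : ∀ l : ℝ, 0 < l → Integrable (fun x => J x * Real.exp (l * x)))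
    (s₀ : ℝ) (hs₀ : s₀ < 0)
    (lamf : ℝ → ℝ) (hlamf : ∀ c : ℝ, 0 < c → 0 < lamf c ∧
      (∫ y, J y * Real.exp (lamf c * y) * y) = c) :
    ∃ cstar : ℝ, 0 < cstar ∧
      ((∫ y, J y * Real.exp (lamf cstar * y)) - 1 - cstar * lamf cstar = s₀) ∧
      (∀ c : ℝ, 0 < c → c < cstar →
        ¬ ∃ lam : ℝ, 0 < lam ∧ (∫ y, J y * Real.exp (lam * y)) - 1 - c * lam = s₀) ∧
      (∃! lam : ℝ, 0 < lam ∧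
        (∫ y, J y * Real.exp (lam * y)) - 1 - cstar * lam = s₀) ∧
      (∀ c : ℝ, cstar < c → ∃ lam₁ lam₂ : ℝ,
        0 < lam₁ ∧ lam₁ < lamf c ∧ lamf c < lam₂ ∧
        ((∫ y, J y * Real.exp (lam₁ * y)) - 1 - c * lam₁ = s₀) ∧
        ((∫ y, J y * Real.exp (lam₂ * y)) - 1 - c * lam₂ = s₀) ∧
        (∀ lam : ℝ, 0 < lam →
          (∫ y, J y * Real.exp (lam * y)) - 1 - c * lam = s₀ →
          lam = lam₁ ∨ lam = lam₂)) := by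
  have h := isStrictSubgradient_integral_mul_exp hJnn
    (hJc.isOpen_support.measure_pos volume ⟨0, hJ0.ne'⟩)
    (integrable_mul_exp hJc.aestronglyMeasurable hJsym hJexp)
    (integrable_mul_exp_mul hJc.aestronglyMeasurable hJsym hJexp)
  have hM0 : ∫ t, J t * exp (0 * t) = 1 := by simpa using hJint
  have hN0 : ∫ t, J t * exp (0 * t) * t = 0 := by simpa using integral_mul_self_eq_zero hJsym
  have hlam (c : ℝ) (hc : 0 < c) : ∫ t, J t * exp (lamf c * t) * t = c := (hlamf c hc).2
  have hmin_anti := h.strictAntiOn_Λ_min hN0 hlam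
  obtain ⟨cstar, hpos, hcstar⟩ := h.exists_Λ_min_eq hM0 hN0 hlam hs₀
  refine ⟨cstar, hpos, hcstar, ?_, ⟨lamf cstar, ⟨(hlamf _ hpos).1, hcstar⟩, ?_⟩, fun c hc => ?_⟩
  · rintro c hc hlt ⟨l, -, hl⟩
    have hbelow := hmin_anti hc hpos hlt
    have hmin := h.Λ_le (hlam c hc) l
    simp only [Λ] at hbelow hmin hcstar
    linarith
  · rintro l ⟨-, hl⟩
    by_contra hne
    exact (h.Λ_lt_of_ne (hlam _ hpos) hne).ne (hcstar.trans hl.symm)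
  · have hc0 := hpos.trans hc
    obtain ⟨l₁, l₂, hl₁, hl₁₀, hl₀₂, hl₁s, hl₂s, huniq⟩ :=
      h.exists_two_roots hM0 (h.pos_of_slope_pos hN0 (by rwa [hlam c hc0])).le (hlam c hc0)
        (hcstar ▸ hmin_anti hpos hc0 hc) hs₀
    exact ⟨l₁, l₂, hl₁, hl₁₀, hl₀₂, hl₁s, hl₂s, fun l _ hl => huniq l hl⟩
end

section
/- With the operator L_s defined as above, L_s is a compact operator on L¹(0, a⁺) for each s ∈ ℝ. -/
/-!
On the unit ball of `L¹(0, a⁺)`, the two integrals `∫ γ φ` and `l ↦ ∫ K(l, ·) π φ` are bounded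
uniformly, so Duhamel's formula makes every `L_s φ` a Lipschitz function on `[0, a⁺]` with
Lipschitz constant and sup bound independent of `φ`. By Arzelà–Ascoli these functions lie in a
compact subset of `C([0, a⁺])`, whose image in `L¹` under the continuous inclusion is compact.
-/

open MeasureTheory Filter Set
open scoped ENNReal NNReal BoundedContinuousFunction

theorem BoundedContinuousFunction.isCompact_closure_setOf_lipschitzWith_norm_le
    {X E : Type*} [PseudoMetricSpace X] [CompactSpace X] [NormedAddCommGroup E] [ProperSpace E]
    (L : ℝ≥0) (M : ℝ) :
    IsCompact (closure {f : X →ᵇ E | LipschitzWith L f ∧ ∀ x, ‖f x‖ ≤ M}) :=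
  arzela_ascoli (Metric.closedBall 0 M) (isCompact_closedBall 0 M) _
    (fun _ x hf => mem_closedBall_zero_iff.2 (hf.2 x))
    (LipschitzWith.uniformEquicontinuous _ L fun f => f.2.1).equicontinuous

open BoundedContinuousFunction in
theorem isCompactOperator_of_lipschitz_representatives
    {α X E F : Type*} [MeasurableSpace α] [TopologicalSpace α] [BorelSpace α]
    [PseudoMetricSpace X] [CompactSpace X] [SeminormedAddCommGroup E]
    [NormedAddCommGroup F] [NormedSpace ℝ F] [ProperSpace F] [SecondCountableTopologyEither α F]
    {μ : Measure α} [IsFiniteMeasure μ] {p : ℝ≥0∞} [Fact (1 ≤ p)]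
    (π : C(α, X)) (T : E → Lp F p μ) (L : ℝ≥0) (M : ℝ)
    (hT : ∀ φ : E, ‖φ‖ ≤ 1 →
      ∃ f : X → F, LipschitzWith L f ∧ (∀ x, ‖f x‖ ≤ M) ∧ T φ =ᵐ[μ] f ∘ π) :
    IsCompactOperator T := by
  let J : (X →ᵇ F) → Lp F p μ := fun b => toLp p μ ℝ (b.compContinuous π)
  have hJ : Continuous J := (toLp p μ ℝ).continuous.comp (continuous_compContinuous π)
  refine ⟨J '' _, (isCompact_closure_setOf_lipschitzWith_norm_le L M).image hJ,
    mem_of_superset (Metric.closedBall_mem_nhds 0 one_pos) fun φ hφ => ?_⟩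
  obtain ⟨f, hfL, hfM, hTf⟩ := hT φ (by simpa using hφ)
  refine ⟨.ofNormedAddCommGroup f hfL.continuous M hfM, subset_closure ⟨hfL, hfM⟩, ?_⟩
  exact Lp.ext ((coeFn_toLp _ _ _ _).trans hTf.symm)

theorem LipschitzOnWith.mul_of_norm_le {α R : Type*} [PseudoMetricSpace α] [SeminormedRing R]
    {f g : α → R} {s : Set α} {Kf Kg : ℝ≥0} {Mf Mg : ℝ}
    (hf : LipschitzOnWith Kf f s) (hg : LipschitzOnWith Kg g s)
    (hfM : ∀ x ∈ s, ‖f x‖ ≤ Mf) (hgM : ∀ x ∈ s, ‖g x‖ ≤ Mg) :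
    LipschitzOnWith (Real.toNNReal (Kf * Mg + Mf * Kg)) (fun x => f x * g x) s := by
  refine LipschitzOnWith.of_dist_le' fun x hx y hy => ?_
  calc dist (f x * g x) (f y * g y) = ‖(f x - f y) * g x + f y * (g x - g y)‖ := by
        rw [dist_eq_norm]; congr 1; noncomm_ring
    _ ≤ ‖f x - f y‖ * ‖g x‖ + ‖f y‖ * ‖g x - g y‖ :=
        (norm_add_le _ _).trans (add_le_add (norm_mul_le _ _) (norm_mul_le _ _))
    _ ≤ Kf * dist x y * Mg + Mf * (Kg * dist x y) := by
        rw [← dist_eq_norm, ← dist_eq_norm]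
        have hMf : 0 ≤ Mf := (norm_nonneg _).trans (hfM y hy)
        gcongr
        exacts [hf.dist_le_mul x hx y hy, hgM x hx, hfM y hy, hg.dist_le_mul x hx y hy]
    _ = (Kf * Mg + Mf * Kg) * dist x y := by ring

theorem lipschitzOnWith_setIntegral_Ioc {E : Type*} [NormedAddCommGroup E] [NormedSpace ℝ E]
    {u : ℝ → E} {a b C : ℝ} (hu : IntegrableOn u (Ioc a b)) (huC : ∀ t ∈ Ioc a b, ‖u t‖ ≤ C) :
    LipschitzOnWith (Real.toNNReal C) (fun x => ∫ t in Ioc a x, u t) (Icc a b) := by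
  refine LipschitzOnWith.of_dist_le' fun x hx y hy => ?_
  have hint : ∀ z ∈ Icc a b, IntervalIntegrable u volume a z := fun z hz =>
    (intervalIntegrable_iff_integrableOn_Ioc_of_le hz.1).2 (hu.mono_set (Ioc_subset_Ioc_right hz.2))
  rw [dist_eq_norm, ← intervalIntegral.integral_of_le hx.1, ← intervalIntegral.integral_of_le hy.1,
    intervalIntegral.integral_interval_sub_left (hint x hx) (hint y hy), Real.dist_eq]
  refine intervalIntegral.norm_integral_le_of_norm_le_const fun t ht => huC t ?_
  exact Ioc_subset_Ioc (le_min hy.1 hx.1) (max_le hy.2 hx.2) ht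

theorem norm_integral_mul_le_of_ae_bound {α : Type*} [MeasurableSpace α] {μ : Measure α}
    {k : α → ℝ} {C : ℝ} (hkC : ∀ᵐ x ∂μ, ‖k x‖ ≤ C) (φ : α →₁[μ] ℝ) :
    ‖∫ x, k x * φ x ∂μ‖ ≤ C * ‖φ‖ := by
  rw [L1.norm_eq_integral_norm, ← integral_const_mul]
  refine (norm_integral_le_integral_norm _).trans (integral_mono_of_nonneg
    (.of_forall fun _ => norm_nonneg _) ((L1.integrable_coeFn φ).norm.const_mul C) ?_)
  filter_upwards [hkC] with x hx
  rw [norm_mul]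
  exact mul_le_mul_of_nonneg_right hx (norm_nonneg _)

/-- Duhamel's formula: the solution of `y' = s y + u`, `y 0 = c`. -/
noncomputable def duhamel (s c : ℝ) (u : ℝ → ℝ) (a : ℝ) : ℝ :=
  Real.exp (s * a) * c + ∫ l in Ioc 0 a, Real.exp (s * (a - l)) * u l

theorem duhamel_eq (s c : ℝ) (u : ℝ → ℝ) (a : ℝ) :
    duhamel s c u a = Real.exp (s * a) * (c + ∫ l in Ioc 0 a, Real.exp (-(s * l)) * u l) := by
  simp only [duhamel, mul_add, ← integral_const_mul, ← mul_assoc, ← Real.exp_add,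
    sub_eq_add_neg, mul_neg]

theorem exists_lipschitzOnWith_duhamel (s ap c₀ C : ℝ) :
    ∃ L : ℝ≥0, ∃ M : ℝ, ∀ c u, |c| ≤ c₀ → IntegrableOn u (Ioc 0 ap) →
      (∀ l ∈ Ioc 0 ap, |u l| ≤ C) →
      LipschitzOnWith L (duhamel s c u) (Icc 0 ap) ∧ ∀ a ∈ Icc 0 ap, |duhamel s c u a| ≤ M := by
  obtain ⟨K, hK⟩ : ∃ K, LipschitzOnWith K (fun a => Real.exp (s * a)) (Icc 0 ap) :=
    (ContDiff.locallyLipschitz (by fun_prop)).locallyLipschitzOn.exists_lipschitzOnWith_of_compact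
      isCompact_Icc
  obtain ⟨E, hE⟩ : ∃ E, ∀ a ∈ Icc 0 ap, ‖Real.exp (s * a)‖ ≤ E :=
    isCompact_Icc.exists_bound_of_continuousOn (by fun_prop)
  obtain ⟨E', hE'⟩ : ∃ E', ∀ l ∈ Icc 0 ap, ‖Real.exp (-(s * l))‖ ≤ E' :=
    isCompact_Icc.exists_bound_of_continuousOn (by fun_prop)
  set Lv := Real.toNNReal (E' * C)
  refine ⟨Real.toNNReal (K * (c₀ + Lv * ap) + E * Lv), E * (c₀ + Lv * ap),
    fun c u hc hu huC => ?_⟩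
  set v := fun a => ∫ l in Ioc 0 a, Real.exp (-(s * l)) * u l
  have hv : LipschitzOnWith Lv v (Icc 0 ap) := by
    refine lipschitzOnWith_setIntegral_Ioc (hu.bdd_mul (c := E') (by fun_prop) ?_) fun l hl => ?_
    · filter_upwards [ae_restrict_mem measurableSet_Ioc] with l hl
      exact hE' l (Ioc_subset_Icc_self hl)
    · rw [norm_mul]
      exact mul_le_mul (hE' l (Ioc_subset_Icc_self hl)) (huC l hl) (norm_nonneg _)
        ((norm_nonneg _).trans (hE' l (Ioc_subset_Icc_self hl)))
  have hw : LipschitzOnWith Lv (fun a => c + v a) (Icc 0 ap) := fun x hx y hy => by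
    simpa only [edist_add_left] using hv hx hy
  have hwM : ∀ a ∈ Icc 0 ap, ‖c + v a‖ ≤ c₀ + Lv * ap := by
    intro a ha
    have hva : ‖v a‖ ≤ Lv * a := by
      simpa [v, abs_of_nonneg ha.1] using hv.dist_le_mul a ha 0 (left_mem_Icc.2 (ha.1.trans ha.2))
    calc ‖c + v a‖ ≤ |c| + ‖v a‖ := norm_add_le _ _
      _ ≤ c₀ + Lv * ap := add_le_add hc (hva.trans (by gcongr; exact ha.2))
  have hdu : duhamel s c u = fun a => Real.exp (s * a) * (c + v a) := funext (duhamel_eq s c u)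
  refine ⟨hdu ▸ hK.mul_of_norm_le hw hE hwM, fun a ha => ?_⟩
  rw [hdu, abs_mul]
  exact mul_le_mul (hE a ha) (hwM a ha) (abs_nonneg _) ((norm_nonneg _).trans (hE a ha))

theorem integrableOn_integral_kernel_mul {ap : ℝ} {k : ℝ → ℝ → ℝ}
    (hk : ContinuousOn (fun p : ℝ × ℝ => k p.1 p.2) (Icc 0 ap ×ˢ Icc 0 ap))
    (φ : Lp ℝ 1 (volume.restrict (Ioc (0:ℝ) ap))) :
    IntegrableOn (fun l => ∫ a' in Ioc 0 ap, k l a' * φ a') (Ioc 0 ap) := by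
  obtain ⟨C, hC⟩ := (isCompact_Icc.prod isCompact_Icc).exists_bound_of_continuousOn hk
  have hkm : AEStronglyMeasurable (fun p : ℝ × ℝ => k p.1 p.2)
      ((volume.restrict (Ioc (0:ℝ) ap)).prod (volume.restrict (Ioc (0:ℝ) ap))) := by
    rw [Measure.prod_restrict, ← Measure.volume_eq_prod]
    exact (hk.aestronglyMeasurable (measurableSet_Icc.prod measurableSet_Icc)).mono_measure
      (Measure.restrict_mono (Set.prod_mono Ioc_subset_Icc_self Ioc_subset_Icc_self) le_rfl)
  refine Integrable.mono' (integrable_const (C * ‖φ‖))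
    (hkm.mul (L1.integrable_coeFn φ).1.comp_snd).integral_prod_right' ?_
  filter_upwards [ae_restrict_mem measurableSet_Ioc] with l hl
  refine norm_integral_mul_le_of_ae_bound ?_ φ
  filter_upwards [ae_restrict_mem measurableSet_Ioc] with a' ha'
  exact hC (l, a') ⟨Ioc_subset_Icc_self hl, Ioc_subset_Icc_self ha'⟩

theorem stmt_7_general (ap : ℝ) (hap : 0 < ap)
    (gam pf : ℝ → ℝ) (Kmat : ℝ → ℝ → ℝ)
    (hgamc : ContinuousOn gam (Set.Icc 0 ap))
    (hKc : ContinuousOn (fun p : ℝ × ℝ => Kmat p.1 p.2) (Set.Icc 0 ap ×ˢ Set.Icc 0 ap))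
    (hpc : ContinuousOn pf (Set.Icc 0 ap))
    (s : ℝ)
    (T : Lp ℝ 1 (volume.restrict (Set.Ioc (0:ℝ) ap)) →L[ℝ]
         Lp ℝ 1 (volume.restrict (Set.Ioc (0:ℝ) ap)))
    (hT : ∀ φ : Lp ℝ 1 (volume.restrict (Set.Ioc (0:ℝ) ap)),
      (T φ : ℝ → ℝ) =ᵐ[volume.restrict (Set.Ioc (0:ℝ) ap)]
        fun a => Real.exp (s * a) * (∫ α in Set.Ioc 0 ap, gam α * φ α) +
          ∫ l in Set.Ioc 0 a, Real.exp (s * (a - l)) *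
            (∫ a' in Set.Ioc 0 ap, Kmat l a' * pf a' * φ a')) :
    IsCompactOperator T := by
  have h0 : (0:ℝ) ∈ Icc 0 ap := left_mem_Icc.2 hap.le
  have hk : ContinuousOn (fun p : ℝ × ℝ => Kmat p.1 p.2 * pf p.2) (Icc 0 ap ×ˢ Icc 0 ap) :=
    hKc.mul (hpc.comp continuousOn_snd fun _ hp => hp.2)
  obtain ⟨Cg, hCg⟩ := isCompact_Icc.exists_bound_of_continuousOn hgamc
  obtain ⟨Ck, hCk⟩ := (isCompact_Icc.prod isCompact_Icc).exists_bound_of_continuousOn hk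
  obtain ⟨L, M, hLM⟩ := exists_lipschitzOnWith_duhamel s ap Cg Ck
  refine isCompactOperator_of_lipschitz_representatives ⟨projIcc 0 ap hap.le, continuous_projIcc⟩
    T L M fun φ hφ => ?_
  have hbound : ∀ {k : ℝ → ℝ} {C : ℝ}, 0 ≤ C → (∀ a ∈ Ioc 0 ap, ‖k a‖ ≤ C) →
      |∫ a in Ioc 0 ap, k a * φ a| ≤ C := fun hC hkC =>
    (norm_integral_mul_le_of_ae_bound ((ae_restrict_mem measurableSet_Ioc).mono hkC) φ).trans
      (mul_le_of_le_one_right hC hφ)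
  obtain ⟨hLip, hM⟩ := hLM _ _
    (hbound ((norm_nonneg _).trans (hCg 0 h0)) fun a ha => hCg a (Ioc_subset_Icc_self ha))
    (integrableOn_integral_kernel_mul hk φ)
    fun l hl => hbound ((norm_nonneg _).trans (hCk (0, 0) ⟨h0, h0⟩))
      fun a' ha' => hCk (l, a') ⟨Ioc_subset_Icc_self hl, Ioc_subset_Icc_self ha'⟩
  refine ⟨fun x : Icc 0 ap => duhamel s _ _ x, hLip.to_restrict, fun x => hM x x.2, ?_⟩
  filter_upwards [hT φ, ae_restrict_mem measurableSet_Ioc] with a hTa ha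
  rw [hTa, Function.comp_apply, ContinuousMap.coe_mk,
    projIcc_of_mem hap.le (Ioc_subset_Icc_self ha)]
  rfl

theorem stmt_7 (ap : ℝ) (hap : 0 < ap)
    (gam pf : ℝ → ℝ) (Kmat : ℝ → ℝ → ℝ)
    (hgamc : ContinuousOn gam (Set.Icc 0 ap)) (hgamnn : ∀ a ∈ Set.Icc 0 ap, 0 ≤ gam a)
    (hgamint : (∫ a in Set.Ioc 0 ap, gam a) = 1)
    (hKc : ContinuousOn (fun p : ℝ × ℝ => Kmat p.1 p.2) (Set.Icc 0 ap ×ˢ Set.Icc 0 ap))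
    (hKpos : ∀ a ∈ Set.Icc 0 ap, ∀ a' ∈ Set.Icc 0 ap, 0 < Kmat a a')
    (hpc : ContinuousOn pf (Set.Icc 0 ap)) (hppos : ∀ a ∈ Set.Icc 0 ap, 0 < pf a)
    (s : ℝ)
    (T : Lp ℝ 1 (volume.restrict (Set.Ioc (0:ℝ) ap)) →L[ℝ]
         Lp ℝ 1 (volume.restrict (Set.Ioc (0:ℝ) ap)))
    (hT : ∀ φ : Lp ℝ 1 (volume.restrict (Set.Ioc (0:ℝ) ap)),
      (T φ : ℝ → ℝ) =ᵐ[volume.restrict (Set.Ioc (0:ℝ) ap)]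
        fun a => Real.exp (s * a) * (∫ α in Set.Ioc 0 ap, gam α * φ α) +
          ∫ l in Set.Ioc 0 a, Real.exp (s * (a - l)) *
            (∫ a' in Set.Ioc 0 ap, Kmat l a' * pf a' * φ a')) :
    IsCompactOperator T :=
  stmt_7_general ap hap gam pf Kmat hgamc hKc hpc s T hT
end

section
/- Let a⁺ > 0, let K : [0, a⁺]² → ℝ be continuous and strictly positive, π : [0, a⁺] → ℝ continuous and strictly positive, and γ : [0, a⁺] → ℝ continuous nonnegative with ∫_0^{a⁺} γ(a) da = 1 and γ ≢ 0. Suppose u ∈ W^{1,1}(0, a⁺) satisfies u'(a) = (∫_0^{a⁺} K(a, a') π(a') u(a') da') (1 − u(a)) for a.e. a ∈ (0, a⁺), the boundary condition u(0) = ∫_0^{a⁺} γ(a) u(a) da, and 0 ≤ u(a) ≤ 1 for all a. Then either u ≡ 0 or u ≡ 1 on [0, a⁺]. -/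
/-!
The right-hand side `F(t) (1 - u t)` of the integral equation, with
`F(t) = ∫ K(t, a') π(a') u(a') da'`, is continuous and nonnegative, so `u` is nondecreasing.
Since `γ` is a probability density, the boundary condition makes `u 0` a `γ`-mean of values
`u a ≥ u 0`, so `u a₂ = u 0` at some `a₂ > 0`. Then `F (1 - u)` integrates to zero on `[0, a₂]`,
hence vanishes at `0`. If `u ≢ 0`, positivity of `K π` gives `F 0 > 0`, so `u 0 = 1`, and
monotonicity together with `u ≤ 1` forces `u ≡ 1`.
-/

open MeasureTheory Filter Set intervalIntegral

theorem continuousOn_setIntegral_of_continuousOn_prod {X Y E : Type*} [TopologicalSpace X]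
    [FirstCountableTopology X] [TopologicalSpace Y] [MeasurableSpace Y] [OpensMeasurableSpace Y]
    [NormedAddCommGroup E] [NormedSpace ℝ E] [SecondCountableTopologyEither Y E]
    {μ : Measure Y} [IsFiniteMeasureOnCompacts μ] {f : X → Y → E} {s : Set X} {k t : Set Y}
    (hs : IsCompact s) (hk : IsCompact k) (ht : MeasurableSet t) (htk : t ⊆ k)
    (hf : ContinuousOn (Function.uncurry f) (s ×ˢ k)) :
    ContinuousOn (fun x => ∫ y in t, f x y ∂μ) s := by
  obtain ⟨C, hC⟩ := (hs.prod hk).exists_bound_of_continuousOn hf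
  refine continuousOn_of_dominated (bound := fun _ => C) ?_ ?_ ?_ ?_
  · exact fun x hx => ((hf.uncurry_left x hx).mono htk).aestronglyMeasurable ht
  · intro x hx
    filter_upwards [ae_restrict_mem ht] with y hy using hC (x, y) (mk_mem_prod hx (htk hy))
  · exact integrableOn_const (measure_ne_top_of_subset htk hk.measure_lt_top.ne)
  · filter_upwards [ae_restrict_mem ht] with y hy using hf.uncurry_right y (htk hy)

theorem eqOn_zero_of_integral_eq_zero {f : ℝ → ℝ} {a b : ℝ} (hab : a < b)
    (hfc : ContinuousOn f (Icc a b)) (hf : ∀ x ∈ Icc a b, 0 ≤ f x)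
    (h : ∫ x in a..b, f x = 0) : EqOn f 0 (Icc a b) := by
  by_contra hne
  obtain ⟨c, hc, hfc0⟩ := not_forall₂.mp hne
  have := integral_pos hab hfc (fun x hx => hf x (Ioc_subset_Icc_self hx))
    ⟨c, hc, (hf c hc).lt_of_ne' hfc0⟩
  exact this.ne' h

theorem monotoneOn_of_eq_add_integral {u g : ℝ → ℝ} {a b : ℝ}
    (hg : IntervalIntegrable g volume a b) (hnn : ∀ x ∈ Icc a b, 0 ≤ g x)
    (hu : ∀ x ∈ Icc a b, u x = u a + ∫ t in a..x, g t) : MonotoneOn u (Icc a b) := by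
  intro x hx y hy hxy
  rw [hu x hx, hu y hy, add_le_add_iff_left]
  refine integral_mono_interval le_rfl hx.1 hxy ?_ (hg.mono_set ?_)
  · filter_upwards [ae_restrict_mem measurableSet_Ioc] with t ht
    exact hnn t ⟨ht.1.le, ht.2.trans hy.2⟩
  · rw [uIcc_of_le hy.1, uIcc_of_le (hy.1.trans hy.2)]
    exact Icc_subset_Icc_right hy.2

theorem exists_mem_Ioc_eq_of_setIntegral_mul_eq {w v : ℝ → ℝ} {a b c : ℝ}
    (hwc : ContinuousOn w (Icc a b)) (hw : ∀ x ∈ Icc a b, 0 ≤ w x)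
    (hw0 : ∫ x in Ioc a b, w x ≠ 0) (hvc : ContinuousOn v (Icc a b))
    (hv : ∀ x ∈ Icc a b, c ≤ v x) (hmean : ∫ x in Ioc a b, w x * v x = c * ∫ x in Ioc a b, w x) :
    ∃ x ∈ Ioc a b, v x = c := by
  obtain ⟨x, hx, hwx⟩ : ∃ x ∈ Ioc a b, w x ≠ 0 := by
    by_contra! h
    exact hw0 (setIntegral_eq_zero_of_forall_eq_zero h)
  refine ⟨x, hx, ?_⟩
  have hab : a < b := hx.1.trans_le hx.2
  have hwint : IntegrableOn w (Ioc a b) := hwc.integrableOn_Icc.mono_set Ioc_subset_Icc_self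
  have hwvint : IntegrableOn (fun x => w x * v x) (Ioc a b) :=
    (hwc.mul hvc).integrableOn_Icc.mono_set Ioc_subset_Icc_self
  have hzero : ∫ x in a..b, w x * (v x - c) = 0 := by
    simp_rw [integral_of_le hab.le, mul_sub]
    rw [integral_sub hwvint (hwint.mul_const c), MeasureTheory.integral_mul_const, hmean]
    ring
  have := eqOn_zero_of_integral_eq_zero hab (hwc.mul (hvc.sub continuousOn_const))
    (fun y hy => mul_nonneg (hw y hy) (sub_nonneg.2 (hv y hy))) hzero (Ioc_subset_Icc_self hx)
  simpa [sub_eq_zero, hwx] using this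

theorem stmt_8_general (ap : ℝ) (hap : 0 < ap)
    (gam pf u : ℝ → ℝ) (Kmat : ℝ → ℝ → ℝ)
    (hgamc : ContinuousOn gam (Set.Icc 0 ap)) (hgamnn : ∀ a ∈ Set.Icc 0 ap, 0 ≤ gam a)
    (hgamint : (∫ a in Set.Ioc 0 ap, gam a) = 1)
    (hKc : ContinuousOn (fun p : ℝ × ℝ => Kmat p.1 p.2) (Set.Icc 0 ap ×ˢ Set.Icc 0 ap))
    (hKpos : ∀ a ∈ Set.Icc 0 ap, ∀ a' ∈ Set.Icc 0 ap, 0 < Kmat a a')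
    (hpc : ContinuousOn pf (Set.Icc 0 ap)) (hppos : ∀ a ∈ Set.Icc 0 ap, 0 < pf a)
    (huc : ContinuousOn u (Set.Icc 0 ap))
    (heq : ∀ a ∈ Set.Icc 0 ap, u a = u 0 +
      ∫ t in (0:ℝ)..a, (∫ a' in Set.Ioc 0 ap, Kmat t a' * pf a' * u a') * (1 - u t))
    (hbc : u 0 = ∫ a in Set.Ioc 0 ap, gam a * u a)
    (hbd : ∀ a ∈ Set.Icc 0 ap, 0 ≤ u a ∧ u a ≤ 1) :
    (∀ a ∈ Set.Icc 0 ap, u a = 0) ∨ (∀ a ∈ Set.Icc 0 ap, u a = 1) := by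
  set I := Icc (0 : ℝ) ap
  set k : ℝ → ℝ → ℝ := fun t a' => Kmat t a' * pf a' * u a'
  set F : ℝ → ℝ := fun t => ∫ a' in Ioc 0 ap, k t a'
  have h0 : (0 : ℝ) ∈ I := ⟨le_rfl, hap.le⟩
  have hkc : ContinuousOn (Function.uncurry k) (I ×ˢ I) :=
    (hKc.mul (hpc.comp continuousOn_snd fun p hp => hp.2)).mul
      (huc.comp continuousOn_snd fun p hp => hp.2)
  have hk_nonneg : ∀ t ∈ I, ∀ a' ∈ I, 0 ≤ k t a' := fun t ht a' ha' =>
    mul_nonneg (mul_pos (hKpos t ht a' ha') (hppos a' ha')).le (hbd a' ha').1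
  have hgc : ContinuousOn (fun t => F t * (1 - u t)) I :=
    (continuousOn_setIntegral_of_continuousOn_prod isCompact_Icc isCompact_Icc measurableSet_Ioc
      Ioc_subset_Icc_self hkc).mul (continuousOn_const.sub huc)
  have hg_nonneg : ∀ t ∈ I, 0 ≤ F t * (1 - u t) := fun t ht =>
    mul_nonneg (setIntegral_nonneg measurableSet_Ioc fun a' ha' =>
      hk_nonneg t ht a' (Ioc_subset_Icc_self ha')) (sub_nonneg.2 (hbd t ht).2)
  have hmono : MonotoneOn u I :=
    monotoneOn_of_eq_add_integral (hgc.intervalIntegrable_of_Icc hap.le) hg_nonneg heq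
  refine or_iff_not_imp_left.2 fun hne => ?_
  obtain ⟨a₁, ha₁, hu₁⟩ := not_forall₂.mp hne
  have hF0 : 0 < F 0 := by
    rw [show F 0 = ∫ a' in 0..ap, k 0 a' from (integral_of_le hap.le).symm]
    refine integral_pos hap (hkc.uncurry_left 0 h0) (fun a' ha' =>
      hk_nonneg 0 h0 a' (Ioc_subset_Icc_self ha')) ⟨a₁, ha₁, ?_⟩
    exact mul_pos (mul_pos (hKpos 0 h0 a₁ ha₁) (hppos a₁ ha₁)) ((hbd a₁ ha₁).1.lt_of_ne' hu₁)
  obtain ⟨a₂, ha₂, hu₂⟩ := exists_mem_Ioc_eq_of_setIntegral_mul_eq hgamc hgamnn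
    (by rw [hgamint]; exact one_ne_zero) huc (fun x hx => hmono h0 hx hx.1)
    (by rw [hgamint, mul_one, hbc])
  have hI₂ : Icc 0 a₂ ⊆ I := Icc_subset_Icc_right ha₂.2
  have hg0 : F 0 * (1 - u 0) = 0 :=
    eqOn_zero_of_integral_eq_zero ha₂.1 (hgc.mono hI₂) (fun t ht => hg_nonneg t (hI₂ ht))
      (by linarith [heq a₂ (Ioc_subset_Icc_self ha₂)]) ⟨le_rfl, ha₂.1.le⟩
  have hu0 : u 0 = 1 := by
    linarith [(mul_eq_zero.1 hg0).resolve_left hF0.ne']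
  exact fun a ha => le_antisymm (hbd a ha).2 (hu0 ▸ hmono h0 ha ha.1)

theorem stmt_8 (ap : ℝ) (hap : 0 < ap)
    (gam pf u : ℝ → ℝ) (Kmat : ℝ → ℝ → ℝ)
    (hgamc : ContinuousOn gam (Set.Icc 0 ap)) (hgamnn : ∀ a ∈ Set.Icc 0 ap, 0 ≤ gam a)
    (hgamint : (∫ a in Set.Ioc 0 ap, gam a) = 1)
    (hgamne : ∃ a ∈ Set.Icc 0 ap, gam a ≠ 0)
    (hKc : ContinuousOn (fun p : ℝ × ℝ => Kmat p.1 p.2) (Set.Icc 0 ap ×ˢ Set.Icc 0 ap))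
    (hKpos : ∀ a ∈ Set.Icc 0 ap, ∀ a' ∈ Set.Icc 0 ap, 0 < Kmat a a')
    (hpc : ContinuousOn pf (Set.Icc 0 ap)) (hppos : ∀ a ∈ Set.Icc 0 ap, 0 < pf a)
    (huc : ContinuousOn u (Set.Icc 0 ap))
    (heq : ∀ a ∈ Set.Icc 0 ap, u a = u 0 +
      ∫ t in (0:ℝ)..a, (∫ a' in Set.Ioc 0 ap, Kmat t a' * pf a' * u a') * (1 - u t))
    (hbc : u 0 = ∫ a in Set.Ioc 0 ap, gam a * u a)
    (hbd : ∀ a ∈ Set.Icc 0 ap, 0 ≤ u a ∧ u a ≤ 1) :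
    (∀ a ∈ Set.Icc 0 ap, u a = 0) ∨ (∀ a ∈ Set.Icc 0 ap, u a = 1) :=
  stmt_8_general ap hap gam pf u Kmat hgamc hgamnn hgamint hKc hKpos hpc hppos huc heq hbc hbd
end

section
/- In the setting of the previous steady-state problem, if u ∈ W^{1,1}(0, a⁺) is a solution with 0 ≤ u ≤ 1 and u(a₀) = 1 for some a₀ ∈ [0, a⁺], then u ≡ 1 on [0, a⁺]. -/
/-!
The rate `g t = ∫ K(t, a') π(a') u(a') da'` is continuous in `t`, so the integral equation makes `u`
a solution of the linear ODE `y' = g t * (1 - y)`, whose right-hand side is Lipschitz in `y`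
uniformly in `t`. The constant `1` solves the same ODE and agrees with `u` at `a₀`, so uniqueness
of solutions, applied to the right and to the left of `a₀`, gives `u = 1`.
-/

open MeasureTheory Set intervalIntegral

theorem continuousOn_setIntegral_Ioc_of_continuousOn_uncurry {X E : Type*} [TopologicalSpace X]
    [FirstCountableTopology X] [NormedAddCommGroup E] [NormedSpace ℝ E]
    {f : X → ℝ → E} {s : Set X} {a b : ℝ} (hs : IsCompact s)
    (hf : ContinuousOn (Function.uncurry f) (s ×ˢ Icc a b)) :
    ContinuousOn (fun x => ∫ y in Ioc a b, f x y) s := by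
  obtain ⟨C, hC⟩ := (hs.prod isCompact_Icc).exists_bound_of_continuousOn hf
  refine continuousOn_of_dominated (bound := fun _ => C) (fun x hx => ?_) (fun x hx => ?_)
    (integrableOn_const measure_Ioc_lt_top.ne) ?_
  · exact ((hf.comp (continuous_const.prodMk continuous_id).continuousOn fun y hy => ⟨hx, hy⟩).mono
      Ioc_subset_Icc_self).aestronglyMeasurable measurableSet_Ioc
  · exact ae_restrict_of_forall_mem measurableSet_Ioc fun y hy =>
      hC (x, y) ⟨hx, Ioc_subset_Icc_self hy⟩
  · exact ae_restrict_of_forall_mem measurableSet_Ioc fun y hy =>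
      hf.comp (continuous_id.prodMk continuous_const).continuousOn
        fun x hx => ⟨hx, Ioc_subset_Icc_self hy⟩

theorem hasDerivWithinAt_Icc_of_eq_add_integral {a b t : ℝ} {h u : ℝ → ℝ}
    (hh : ContinuousOn h (Icc a b)) (hu : ∀ x ∈ Icc a b, u x = u a + ∫ s in a..x, h s)
    (ht : t ∈ Icc a b) : HasDerivWithinAt u (h t) (Icc a b) t := by
  have hab : a ≤ b := ht.1.trans ht.2
  -- a continuous extension of `h` to `ℝ` gives a genuine primitive agreeing with `u` on `[a, b]`
  set H := IccExtend hab ((Icc a b).domRestrict h)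
  have hH : Continuous H := (continuousOn_iff_continuous_domRestrict.1 hh).Icc_extend'
  have hHh : EqOn H h (Icc a b) := fun x hx => IccExtend_of_mem hab _ hx
  have hU := ((hH.integral_hasStrictDerivAt a t).hasDerivAt.const_add (u a)).hasDerivWithinAt
    (s := Icc a b)
  rw [hHh ht] at hU
  refine hU.congr_of_mem (fun x hx => ?_) ht
  rw [hu x hx, integral_congr fun s hs => hHh ?_]
  rw [uIcc_of_le hx.1] at hs
  exact ⟨hs.1, hs.2.trans hx.2⟩

theorem lipschitzWith_mul_one_sub (c : ℝ) : LipschitzWith ‖c‖₊ fun x : ℝ => c * (1 - x) :=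
  LipschitzWith.of_dist_le_mul fun x y => by
    rw [Real.dist_eq, Real.dist_eq, ← mul_sub, abs_mul, sub_sub_sub_cancel_left, abs_sub_comm]
    rfl

theorem eqOn_one_of_eq_add_integral_mul_one_sub {a b x₀ : ℝ} {g u : ℝ → ℝ}
    (hg : ContinuousOn g (Icc a b)) (hu : ContinuousOn u (Icc a b))
    (heq : ∀ x ∈ Icc a b, u x = u a + ∫ t in a..x, g t * (1 - u t))
    (hx₀ : x₀ ∈ Icc a b) (hux₀ : u x₀ = 1) : EqOn u 1 (Icc a b) := by
  obtain ⟨C, hC⟩ := isCompact_Icc.exists_bound_of_continuousOn hg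
  have hv : ∀ t ∈ Icc a b, LipschitzOnWith C.toNNReal (fun x => g t * (1 - x)) univ :=
    fun t ht => ((lipschitzWith_mul_one_sub (g t)).weaken
      (NNReal.coe_le_coe.1 ((hC t ht).trans (Real.le_coe_toNNReal C)))).lipschitzOnWith
  have hu' : ∀ t ∈ Icc a b, HasDerivWithinAt u (g t * (1 - u t)) (Icc a b) t :=
    fun t => hasDerivWithinAt_Icc_of_eq_add_integral (hg.mul (continuousOn_const.sub hu)) heq
  have hone : ∀ t (s : Set ℝ), HasDerivWithinAt (fun _ => 1) (g t * (1 - 1)) s t :=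
    fun t s => by simpa using hasDerivWithinAt_const t s (1 : ℝ)
  have hright : EqOn u 1 (Icc x₀ b) :=
    ODE_solution_unique_of_mem_Icc_right (fun t ht => hv t ⟨hx₀.1.trans ht.1, ht.2.le⟩)
      (hu.mono (Icc_subset_Icc_left hx₀.1))
      (fun t ht => (hu' t ⟨hx₀.1.trans ht.1, ht.2.le⟩).mono_of_mem_nhdsWithin
        (Icc_mem_nhdsGE_of_mem ⟨hx₀.1.trans ht.1, ht.2⟩))
      (fun _ _ => mem_univ _) continuousOn_const (fun t _ => hone t _) (fun _ _ => mem_univ _)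
      hux₀
  have hleft : EqOn u 1 (Icc a x₀) :=
    ODE_solution_unique_of_mem_Icc_left (fun t ht => hv t ⟨ht.1.le, ht.2.trans hx₀.2⟩)
      (hu.mono (Icc_subset_Icc_right hx₀.2))
      (fun t ht => (hu' t ⟨ht.1.le, ht.2.trans hx₀.2⟩).mono_of_mem_nhdsWithin
        (Icc_mem_nhdsLE_of_mem ⟨ht.1, ht.2.trans hx₀.2⟩))
      (fun _ _ => mem_univ _) continuousOn_const (fun t _ => hone t _) (fun _ _ => mem_univ _)
      hux₀
  intro x hx
  rcases le_total x x₀ with h | h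
  · exact hleft ⟨hx.1, h⟩
  · exact hright ⟨h, hx.2⟩

theorem stmt_9_general (ap : ℝ)
    (pf u : ℝ → ℝ) (Kmat : ℝ → ℝ → ℝ)
    (hKc : ContinuousOn (fun p : ℝ × ℝ => Kmat p.1 p.2) (Set.Icc 0 ap ×ˢ Set.Icc 0 ap))
    (hpc : ContinuousOn pf (Set.Icc 0 ap))
    (huc : ContinuousOn u (Set.Icc 0 ap))
    (heq : ∀ a ∈ Set.Icc 0 ap, u a = u 0 +
      ∫ t in (0:ℝ)..a, (∫ a' in Set.Ioc 0 ap, Kmat t a' * pf a' * u a') * (1 - u t))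
    (a₀ : ℝ) (ha₀ : a₀ ∈ Set.Icc 0 ap) (hu1 : u a₀ = 1) :
    ∀ a ∈ Set.Icc 0 ap, u a = 1 := by
  have hpuc : ContinuousOn (fun p : ℝ × ℝ => pf p.2 * u p.2) (Icc 0 ap ×ˢ Icc 0 ap) :=
    (hpc.mul huc).comp continuousOn_snd fun _ hp => hp.2
  have hrate : ContinuousOn (fun t => ∫ a' in Ioc 0 ap, Kmat t a' * pf a' * u a') (Icc 0 ap) :=
    continuousOn_setIntegral_Ioc_of_continuousOn_uncurry isCompact_Icc <| by
      simpa only [Function.uncurry_def, mul_assoc] using hKc.fun_mul hpuc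
  exact eqOn_one_of_eq_add_integral_mul_one_sub hrate huc heq ha₀ hu1

theorem stmt_9 (ap : ℝ) (hap : 0 < ap)
    (gam pf u : ℝ → ℝ) (Kmat : ℝ → ℝ → ℝ)
    (hgamc : ContinuousOn gam (Set.Icc 0 ap)) (hgamnn : ∀ a ∈ Set.Icc 0 ap, 0 ≤ gam a)
    (hgamint : (∫ a in Set.Ioc 0 ap, gam a) = 1)
    (hKc : ContinuousOn (fun p : ℝ × ℝ => Kmat p.1 p.2) (Set.Icc 0 ap ×ˢ Set.Icc 0 ap))
    (hKpos : ∀ a ∈ Set.Icc 0 ap, ∀ a' ∈ Set.Icc 0 ap, 0 < Kmat a a')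
    (hpc : ContinuousOn pf (Set.Icc 0 ap)) (hppos : ∀ a ∈ Set.Icc 0 ap, 0 < pf a)
    (huc : ContinuousOn u (Set.Icc 0 ap))
    (heq : ∀ a ∈ Set.Icc 0 ap, u a = u 0 +
      ∫ t in (0:ℝ)..a, (∫ a' in Set.Ioc 0 ap, Kmat t a' * pf a' * u a') * (1 - u t))
    (hbc : u 0 = ∫ a in Set.Ioc 0 ap, gam a * u a)
    (hbd : ∀ a ∈ Set.Icc 0 ap, 0 ≤ u a ∧ u a ≤ 1)
    (a₀ : ℝ) (ha₀ : a₀ ∈ Set.Icc 0 ap) (hu1 : u a₀ = 1) :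
    ∀ a ∈ Set.Icc 0 ap, u a = 1 :=
  stmt_9_general ap pf u Kmat hKc hpc huc heq a₀ ha₀ hu1
end

section
/- In the setting of the steady-state problem, if u ∈ W^{1,1}(0, a⁺) is a solution with 0 ≤ u ≤ 1 and u(a₀) = 0 for some a₀ ∈ (0, a⁺], then u ≡ 0 on [0, a⁺]. (If u(0) = 0, the boundary condition and γ ≢ 0 produce an interior zero, reducing to the same conclusion.) -/
/-!
With `λ t = ∫ K(t, ·) π u`, both terms of `u a₀ = u 0 + ∫₀^{a₀} λ (1 - u)` are nonnegative,
so `u 0 = 0` and the continuous nonnegative integrand `λ (1 - u)` vanishes on `[0, a₀]`.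
At `t = 0` this gives `λ 0 = 0`; as `K(0, ·) π > 0` and `u ≥ 0` is continuous, `u ≡ 0`.
-/

open MeasureTheory Set intervalIntegral

theorem eqOn_zero_of_intervalIntegral_eq_zero {f : ℝ → ℝ} {a b : ℝ} (hab : a < b)
    (hf : ContinuousOn f (Icc a b)) (hf₀ : ∀ x ∈ Ioc a b, 0 ≤ f x)
    (h : ∫ x in a..b, f x = 0) : EqOn f 0 (Icc a b) := by
  have hfi : IntervalIntegrable f volume a b := hf.intervalIntegrable_of_Icc hab.le
  have hae : f =ᵐ[volume.restrict (Ioc a b)] 0 :=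
    (integral_eq_zero_iff_of_le_of_nonneg_ae hab.le
      (ae_restrict_of_forall_mem measurableSet_Ioc hf₀) hfi).1 h
  rw [Measure.restrict_congr_set Ioc_ae_eq_Icc] at hae
  exact Measure.eqOn_Icc_of_ae_eq volume hab.ne hae hf continuousOn_const

theorem eqOn_zero_of_setIntegral_mul_eq_zero {w u : ℝ → ℝ} {a b : ℝ} (hab : a < b)
    (hw : ContinuousOn w (Icc a b)) (hw₀ : ∀ x ∈ Icc a b, 0 < w x)
    (hu : ContinuousOn u (Icc a b)) (hu₀ : ∀ x ∈ Icc a b, 0 ≤ u x)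
    (h : ∫ x in Ioc a b, w x * u x = 0) : EqOn u 0 (Icc a b) := by
  have hwu : EqOn (fun x => w x * u x) 0 (Icc a b) :=
    eqOn_zero_of_intervalIntegral_eq_zero hab (hw.mul hu)
      (fun x hx => mul_nonneg (hw₀ x (Ioc_subset_Icc_self hx)).le
        (hu₀ x (Ioc_subset_Icc_self hx)))
      (by rwa [integral_of_le hab.le])
  exact fun x hx => (mul_eq_zero.1 (hwu hx)).resolve_left (hw₀ x hx).ne'

theorem continuousOn_setIntegral_Ioc {X : Type*} [TopologicalSpace X] [FirstCountableTopology X]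
    {s : Set X} (hs : IsCompact s) {f : X → ℝ → ℝ} {a b : ℝ}
    (hf : ContinuousOn (Function.uncurry f) (s ×ˢ Icc a b)) :
    ContinuousOn (fun x => ∫ y in Ioc a b, f x y) s := by
  obtain ⟨M, hM⟩ := (hs.prod isCompact_Icc).exists_bound_of_continuousOn hf
  have hslice : ∀ x ∈ s, ContinuousOn (f x) (Icc a b) := fun x hx =>
    hf.comp (Continuous.prodMk_right x).continuousOn fun y hy => mk_mem_prod hx hy
  refine continuousOn_of_dominated (bound := fun _ => M) (fun x hx => ?_) (fun x hx => ?_)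
    (integrable_const M) (ae_restrict_of_forall_mem measurableSet_Ioc fun y hy => ?_)
  · exact ((hslice x hx).aestronglyMeasurable measurableSet_Icc).mono_set Ioc_subset_Icc_self
  · exact ae_restrict_of_forall_mem measurableSet_Ioc fun y hy =>
      hM (x, y) (mk_mem_prod hx (Ioc_subset_Icc_self hy))
  · exact hf.comp (Continuous.prodMk_left y).continuousOn fun x hx =>
      mk_mem_prod hx (Ioc_subset_Icc_self hy)

theorem stmt_10_general (ap : ℝ) (hap : 0 < ap)
    (pf u : ℝ → ℝ) (Kmat : ℝ → ℝ → ℝ)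
    (hKc : ContinuousOn (fun p : ℝ × ℝ => Kmat p.1 p.2) (Set.Icc 0 ap ×ˢ Set.Icc 0 ap))
    (hKpos : ∀ a ∈ Set.Icc 0 ap, ∀ a' ∈ Set.Icc 0 ap, 0 < Kmat a a')
    (hpc : ContinuousOn pf (Set.Icc 0 ap)) (hppos : ∀ a ∈ Set.Icc 0 ap, 0 < pf a)
    (huc : ContinuousOn u (Set.Icc 0 ap))
    (heq : ∀ a ∈ Set.Icc 0 ap, u a = u 0 +
      ∫ t in (0:ℝ)..a, (∫ a' in Set.Ioc 0 ap, Kmat t a' * pf a' * u a') * (1 - u t))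
    (hbd : ∀ a ∈ Set.Icc 0 ap, 0 ≤ u a ∧ u a ≤ 1)
    (a₀ : ℝ) (ha₀ : a₀ ∈ Set.Ioc 0 ap) (hu0 : u a₀ = 0) :
    ∀ a ∈ Set.Icc 0 ap, u a = 0 := by
  set lam : ℝ → ℝ := fun t => ∫ a' in Ioc 0 ap, Kmat t a' * pf a' * u a'
  have h0 : (0 : ℝ) ∈ Icc 0 ap := left_mem_Icc.2 hap.le
  have hIcc₀ : Icc 0 a₀ ⊆ Icc 0 ap := Icc_subset_Icc_right ha₀.2
  have hlam_cont : ContinuousOn lam (Icc 0 ap) :=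
    continuousOn_setIntegral_Ioc isCompact_Icc <|
      (hKc.mul (hpc.comp continuous_snd.continuousOn fun _ hp => hp.2)).mul
        (huc.comp continuous_snd.continuousOn fun _ hp => hp.2)
  have hF_nonneg : ∀ t ∈ Icc 0 ap, 0 ≤ lam t * (1 - u t) := fun t ht =>
    mul_nonneg (setIntegral_nonneg measurableSet_Ioc fun a' ha' =>
      mul_nonneg (mul_pos (hKpos t ht a' (Ioc_subset_Icc_self ha'))
        (hppos a' (Ioc_subset_Icc_self ha'))).le (hbd a' (Ioc_subset_Icc_self ha')).1)
      (sub_nonneg.2 (hbd t ht).2)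
  have hint_nonneg : 0 ≤ ∫ t in (0:ℝ)..a₀, lam t * (1 - u t) :=
    integral_nonneg ha₀.1.le fun t ht => hF_nonneg t (hIcc₀ ht)
  have hu00 : u 0 = 0 := by linarith [heq a₀ (Ioc_subset_Icc_self ha₀), (hbd 0 h0).1]
  have hint0 : ∫ t in (0:ℝ)..a₀, lam t * (1 - u t) = 0 := by
    linarith [heq a₀ (Ioc_subset_Icc_self ha₀)]
  have hlam0 : lam 0 = 0 := by
    have hF0 := eqOn_zero_of_intervalIntegral_eq_zero ha₀.1
      ((hlam_cont.mul (continuousOn_const.sub huc)).mono hIcc₀)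
      (fun t ht => hF_nonneg t (hIcc₀ (Ioc_subset_Icc_self ht))) hint0 (left_mem_Icc.2 ha₀.1.le)
    simpa [hu00] using hF0
  exact eqOn_zero_of_setIntegral_mul_eq_zero hap
    ((hKc.comp (Continuous.prodMk_right 0).continuousOn fun _ ha' => mk_mem_prod h0 ha').mul hpc)
    (fun a' ha' => mul_pos (hKpos 0 h0 a' ha') (hppos a' ha')) huc (fun a' ha' => (hbd a' ha').1)
    hlam0

theorem stmt_10 (ap : ℝ) (hap : 0 < ap)
    (gam pf u : ℝ → ℝ) (Kmat : ℝ → ℝ → ℝ)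
    (hgamc : ContinuousOn gam (Set.Icc 0 ap)) (hgamnn : ∀ a ∈ Set.Icc 0 ap, 0 ≤ gam a)
    (hgamint : (∫ a in Set.Ioc 0 ap, gam a) = 1)
    (hgamne : ∃ a ∈ Set.Icc 0 ap, gam a ≠ 0)
    (hKc : ContinuousOn (fun p : ℝ × ℝ => Kmat p.1 p.2) (Set.Icc 0 ap ×ˢ Set.Icc 0 ap))
    (hKpos : ∀ a ∈ Set.Icc 0 ap, ∀ a' ∈ Set.Icc 0 ap, 0 < Kmat a a')
    (hpc : ContinuousOn pf (Set.Icc 0 ap)) (hppos : ∀ a ∈ Set.Icc 0 ap, 0 < pf a)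
    (huc : ContinuousOn u (Set.Icc 0 ap))
    (heq : ∀ a ∈ Set.Icc 0 ap, u a = u 0 +
      ∫ t in (0:ℝ)..a, (∫ a' in Set.Ioc 0 ap, Kmat t a' * pf a' * u a') * (1 - u t))
    (hbc : u 0 = ∫ a in Set.Ioc 0 ap, gam a * u a)
    (hbd : ∀ a ∈ Set.Icc 0 ap, 0 ≤ u a ∧ u a ≤ 1)
    (a₀ : ℝ) (ha₀ : a₀ ∈ Set.Ioc 0 ap) (hu0 : u a₀ = 0) :
    ∀ a ∈ Set.Icc 0 ap, u a = 0 :=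
  stmt_10_general ap hap pf u Kmat hKc hKpos hpc hppos huc heq hbd a₀ ha₀ hu0
end

section
/- Let J be continuous, nonnegative, with ∫ J = 1 and J(0) > 0, and let T be the convolution operator (Tφ)(x) = ∫ J(x−y) φ(y) dy on C_b(ℝ). If u ∈ C_b(ℝ) is nonnegative, u ≢ 0, then for every t > 0 and every x ∈ ℝ, (e^{tT} u)(x) = Σ_{n=0}^∞ (tⁿ/n!) (J^{*n} ∗ u)(x) > 0. -/
open MeasureTheory Filter Set

/-- One convolution step with the kernel `J`. -/
noncomputable def convStep (J : ℝ → ℝ) (v : ℝ → ℝ) : ℝ → ℝ :=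
  fun x => ∫ y, J (x - y) * v y

/-!
The iterates `vₙ = Tⁿ u` stay continuous with values in `[0, C]`, because `J ≥ 0` has mass one.
Positivity spreads: if `J ≥ c` on `[-δ, δ]` and `vₙ ≥ mₙ` on a ball of radius `r` around `x₀`,
then `vₙ₊₁ ≥ c mₙ ℓ` on the ball of radius `r + δ/2`, where `ℓ ≤ min (2r) (δ/2)` is a lower bound
for the length of `[x₀ - r, x₀ + r] ∩ [y - δ, y + δ]`. Starting from a ball on which `u ≥ u(x₀)/2`, every `x` is reached
after finitely many steps `N`, and then the `N`-th term of the (convergent, nonnegative)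
exponential series is positive.
-/

open Metric
open scoped Convolution

def contIcc (C : ℝ) : Set (ℝ → ℝ) := {v | Continuous v ∧ ∀ x, v x ∈ Icc 0 C}

theorem exists_half_le_on_closedBall {X : Type*} [PseudoMetricSpace X] {f : X → ℝ} {a : X}
    (hf : ContinuousAt f a) (ha : 0 < f a) : ∃ δ > 0, ∀ z ∈ closedBall a δ, f a / 2 ≤ f z :=
  nhds_basis_closedBall.eventually_iff.1
    ((continuousAt_const.eventually_lt hf (half_lt_self ha)).mono fun _ => le_of_lt)

theorem le_volume_real_closedBall_inter {a y r δ ℓ : ℝ} (hy : dist y a ≤ r + δ / 2)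
    (hℓr : ℓ ≤ 2 * r) (hℓδ : ℓ ≤ δ / 2) (hℓ : 0 ≤ ℓ) :
    ℓ ≤ volume.real (closedBall a r ∩ closedBall y δ) := by
  rw [Real.closedBall_eq_Icc, Real.closedBall_eq_Icc, Icc_inter_Icc, Real.volume_real_Icc]
  rw [Real.dist_eq, abs_le] at hy
  refine le_max_of_le_left (le_sub_comm.1 (max_le ?_ ?_)) <;>
    refine le_sub_iff_add_le.2 (le_min ?_ ?_) <;> linarith

section convStep

variable {J v : ℝ → ℝ} {C : ℝ}

theorem convStep_eq_convolution (J v : ℝ → ℝ) :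
    convStep J v = v ⋆[ContinuousLinearMap.mul ℝ ℝ] J := by
  ext x
  simp only [convStep, convolution_mul, mul_comm]

theorem norm_le_of_mem_contIcc (hv : v ∈ contIcc C) (x : ℝ) : ‖v x‖ ≤ C := by
  rw [Real.norm_eq_abs, abs_of_nonneg (hv.2 x).1]
  exact (hv.2 x).2

theorem integrable_mul_of_mem_contIcc (hJ : Integrable J) (hv : v ∈ contIcc C) (y : ℝ) :
    Integrable fun z => J (y - z) * v z :=
  (hJ.comp_sub_left y).mul_bdd hv.1.aestronglyMeasurable
    (ae_of_all _ (norm_le_of_mem_contIcc hv))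

theorem mapsTo_convStep_contIcc (hJ : Integrable J) (hJnn : ∀ x, 0 ≤ J x)
    (hJint : ∫ x, J x = 1) : MapsTo (convStep J) (contIcc C) (contIcc C) := by
  intro v hv
  refine ⟨?_, fun x => ⟨integral_nonneg fun y => mul_nonneg (hJnn _) (hv.2 y).1, ?_⟩⟩
  · rw [convStep_eq_convolution]
    refine BddAbove.continuous_convolution_left_of_integrable _ ⟨C, ?_⟩ hv.1 hJ
    rintro _ ⟨y, rfl⟩
    exact norm_le_of_mem_contIcc hv y
  · calc convStep J v x ≤ ∫ y, J (x - y) * C :=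
          integral_mono (integrable_mul_of_mem_contIcc hJ hv x) ((hJ.comp_sub_left x).mul_const C)
            fun y => mul_le_mul_of_nonneg_left (hv.2 y).2 (hJnn _)
      _ = C := by rw [integral_mul_const, integral_sub_left_eq_self J volume x, hJint, one_mul]

theorem mul_mul_le_convStep {a y r δ c m ℓ : ℝ} (hJnn : ∀ z, 0 ≤ J z) (hvnn : ∀ z, 0 ≤ v z)
    (hint : Integrable fun z => J (y - z) * v z)
    (hJ : ∀ z ∈ closedBall 0 δ, c ≤ J z) (hv : ∀ z ∈ closedBall a r, m ≤ v z)
    (hc : 0 ≤ c) (hm : 0 ≤ m) (hy : dist y a ≤ r + δ / 2)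
    (hℓr : ℓ ≤ 2 * r) (hℓδ : ℓ ≤ δ / 2) (hℓ : 0 ≤ ℓ) :
    c * m * ℓ ≤ convStep J v y := by
  set s := closedBall a r ∩ closedBall y δ
  have hs : volume s ≠ ⊤ :=
    ((measure_mono inter_subset_left).trans_lt measure_closedBall_lt_top).ne
  calc c * m * ℓ ≤ c * m * volume.real s :=
        mul_le_mul_of_nonneg_left (le_volume_real_closedBall_inter hy hℓr hℓδ hℓ)
          (mul_nonneg hc hm)
    _ ≤ ∫ z in s, J (y - z) * v z := by
        refine setIntegral_ge_of_const_le_real (measurableSet_closedBall.inter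
          measurableSet_closedBall) hs (fun z hz => ?_) hint.integrableOn
        have hJz : y - z ∈ closedBall 0 δ := by
          simpa [Real.dist_eq, abs_sub_comm] using hz.2
        exact mul_le_mul (hJ _ hJz) (hv _ hz.1) hm (hJnn _)
    _ ≤ convStep J v y :=
        setIntegral_le_integral hint (ae_of_all _ fun z => mul_nonneg (hJnn _) (hvnn z))

theorem le_iterate_convStep {u : ℝ → ℝ} {a r δ c m ℓ : ℝ} (hJ : Integrable J)
    (hJnn : ∀ x, 0 ≤ J x) (hJint : ∫ x, J x = 1) (hu : u ∈ contIcc C)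
    (hJδ : ∀ z ∈ closedBall 0 δ, c ≤ J z) (hur : ∀ z ∈ closedBall a r, m ≤ u z)
    (hc : 0 ≤ c) (hm : 0 ≤ m) (hℓr : ℓ ≤ 2 * r) (hℓδ : ℓ ≤ δ / 2) (hℓ : 0 ≤ ℓ) (n : ℕ) :
    ∀ y ∈ closedBall a (r + n * (δ / 2)), m * (c * ℓ) ^ n ≤ (convStep J)^[n] u y := by
  induction n with
  | zero => simpa using hur
  | succ n ih =>
    intro y hy
    have hvn := (mapsTo_convStep_contIcc hJ hJnn hJint).iterate n hu
    rw [Function.iterate_succ_apply']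
    calc m * (c * ℓ) ^ (n + 1) = c * (m * (c * ℓ) ^ n) * ℓ := by ring
      _ ≤ convStep J ((convStep J)^[n] u) y := by
        refine mul_mul_le_convStep hJnn (fun z => (hvn.2 z).1)
          (integrable_mul_of_mem_contIcc hJ hvn y) hJδ ih hc (by positivity) ?_ ?_ hℓδ hℓ
        · rw [mem_closedBall] at hy
          push_cast at hy
          linarith
        · linarith [mul_nonneg n.cast_nonneg (hℓ.trans hℓδ)]

end convStep

theorem tsum_pow_div_factorial_mul_pos {t C : ℝ} {f : ℕ → ℝ} (ht : 0 < t)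
    (hf : ∀ n, f n ∈ Icc 0 C) {N : ℕ} (hN : 0 < f N) :
    0 < ∑' n, t ^ n / n.factorial * f n := by
  have hterm : ∀ n, 0 ≤ t ^ n / n.factorial * f n := fun n => by
    have := (hf n).1
    positivity
  refine (Summable.of_nonneg_of_le hterm (fun n => ?_)
    ((Real.summable_pow_div_factorial t).mul_right C)).tsum_pos hterm N (by positivity)
  exact mul_le_mul_of_nonneg_left (hf n).2 (by positivity)

theorem stmt_13 (J : ℝ → ℝ) (hJc : Continuous J) (hJnn : ∀ x, 0 ≤ J x)
    (hJint : ∫ x, J x = 1) (hJ0 : 0 < J 0)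
    (u : ℝ → ℝ) (huc : Continuous u) (hub : ∃ C : ℝ, ∀ x, |u x| ≤ C)
    (hunn : ∀ x, 0 ≤ u x) (hune : ∃ x, u x ≠ 0)
    (t : ℝ) (ht : 0 < t) :
    ∀ x : ℝ, 0 < ∑' n : ℕ, (t ^ n / (Nat.factorial n : ℝ)) * (convStep J)^[n] u x := by
  have hJ : Integrable J := .of_integral_ne_zero (by rw [hJint]; exact one_ne_zero)
  obtain ⟨C, hC⟩ := hub
  have hu : u ∈ contIcc C := ⟨huc, fun x => ⟨hunn x, (le_abs_self _).trans (hC x)⟩⟩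
  obtain ⟨x₀, hx₀⟩ := hune
  have hux₀ : 0 < u x₀ := (hunn x₀).lt_of_ne' hx₀
  obtain ⟨δ, hδ, hJδ⟩ := exists_half_le_on_closedBall hJc.continuousAt hJ0
  obtain ⟨ε, hε, huε⟩ := exists_half_le_on_closedBall huc.continuousAt hux₀
  set ℓ := min (2 * ε) (δ / 2)
  have hℓ : 0 < ℓ := lt_min (by positivity) (by positivity)
  have hlow := le_iterate_convStep hJ hJnn hJint hu hJδ huε (by positivity) (by positivity)
    (min_le_left _ _) (min_le_right _ _) hℓ.le
  intro x
  obtain ⟨N, hN⟩ := exists_nat_ge (dist x x₀ / (δ / 2))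
  refine tsum_pow_div_factorial_mul_pos ht
    (fun n => ((mapsTo_convStep_contIcc hJ hJnn hJint).iterate n hu).2 x)
    ((by positivity : 0 < u x₀ / 2 * (J 0 / 2 * ℓ) ^ N).trans_le (hlow N x ?_))
  rw [mem_closedBall]
  have := (div_le_iff₀ (by positivity)).1 hN
  linarith
end

section
/- Let s₀ < 0 and λ₀ = −s₀ > 0. Define c₀ := inf_{λ > 0} (∫_ℝ J(y) e^{λ y} dy − 1 + λ₀)/λ. Then c₀ > 0 and c₀ = c*, where c* is the critical speed determined by Λ(λ(c*), c*) = s₀ with Λ(λ, c) = ∫ J(y) e^{λ y} dy − 1 − c λ and λ(c) the unique positive root of ∫ J(y) e^{λ y} y dy = c. Equivalently, the infimum defining c₀ is attained at λ = λ(c*), and at a critical point λ of H(λ) = (∫ J(y) e^{λ y} dy − 1 + λ₀)/λ one has ∫ J(y) e^{λ y}(λ y − 1) dy = ∫ J(y) e^{λ* y}(λ* y − 1) dy, which forces λ = λ* by strict monotonicity of λ ↦ ∫ J(y) e^{λ y}(λ y − 1) dy. -/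
/-!
The moment generating function `M(λ) = ∫ J(y) e^{λ y} dy` is convex, and by `hroot` its tangent
line at `λ*` has slope `c*`. By `hcrit` that tangent line is `λ ↦ c* λ + 1 - λ₀`, so
`M(λ) - 1 + λ₀ ≥ c* λ` for every `λ > 0`, with equality at `λ = λ*`. Hence the infimum of
`(M(λ) - 1 + λ₀) / λ` is `c*`, attained at `λ*`.
-/

open MeasureTheory

lemma abs_mul_exp_mul_le_s17 (b δ x : ℝ) (hδ : 0 < δ) :
    |x| * Real.exp (b * x) ≤ (Real.exp ((b - δ) * x) + Real.exp ((b + δ) * x)) / δ := by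
  rw [le_div_iff₀ hδ]
  have hsplit : ∀ t, Real.exp ((b + t) * x) = Real.exp (b * x) * Real.exp (t * x) := fun t => by
    rw [← Real.exp_add]; ring_nf
  have habs : δ * |x| ≤ Real.exp (-δ * x) + Real.exp (δ * x) := by
    rcases abs_cases x with ⟨hx, -⟩ | ⟨hx, -⟩ <;> rw [hx]
    · linarith [Real.add_one_le_exp (δ * x), Real.exp_pos (-δ * x)]
    · linarith [Real.add_one_le_exp (-δ * x), Real.exp_pos (δ * x)]
  rw [sub_eq_add_neg, hsplit, hsplit, ← mul_add]
  nlinarith [Real.exp_pos (b * x)]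

lemma integrable_mul_exp_mul_id {f : ℝ → ℝ} {b δ : ℝ} (hδ : 0 < δ)
    (hlo : Integrable (fun x => f x * Real.exp ((b - δ) * x)))
    (hhi : Integrable (fun x => f x * Real.exp ((b + δ) * x))) :
    Integrable (fun x => f x * Real.exp (b * x) * x) := by
  refine ((hlo.norm.add hhi.norm).div_const δ).mono' ?_ (ae_of_all _ fun x => ?_)
  · have hcont : Continuous fun x : ℝ => Real.exp (-δ * x) * x := by fun_prop
    refine (hhi.aestronglyMeasurable.mul hcont.aestronglyMeasurable).congr
      (ae_of_all _ fun x => ?_)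
    simp only [Pi.mul_apply]
    rw [mul_assoc, ← mul_assoc (Real.exp _), ← Real.exp_add]
    ring_nf
  · simp only [norm_mul, Real.norm_eq_abs, Real.abs_exp, Pi.add_apply]
    rw [mul_assoc, mul_comm (Real.exp _), ← mul_add, mul_div_assoc]
    exact mul_le_mul_of_nonneg_left (abs_mul_exp_mul_le_s17 b δ x hδ) (abs_nonneg _)

lemma tangent_le_integral_mul_exp {f : ℝ → ℝ} (hf : ∀ x, 0 ≤ f x) {a b : ℝ}
    (ha : Integrable (fun x => f x * Real.exp (a * x)))
    (ha' : Integrable (fun x => f x * Real.exp (a * x) * x))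
    (hb : Integrable (fun x => f x * Real.exp (b * x))) :
    (∫ x, f x * Real.exp (a * x)) + (b - a) * ∫ x, f x * Real.exp (a * x) * x ≤
      ∫ x, f x * Real.exp (b * x) := by
  rw [← integral_const_mul, ← integral_add ha (ha'.const_mul _)]
  refine integral_mono (ha.add (ha'.const_mul _)) hb fun x => ?_
  have htangent : Real.exp (a * x) * (1 + (b - a) * x) ≤ Real.exp (b * x) := by
    calc Real.exp (a * x) * (1 + (b - a) * x)
        ≤ Real.exp (a * x) * Real.exp ((b - a) * x) := by
          gcongr; linarith [Real.add_one_le_exp ((b - a) * x)]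
      _ = Real.exp (b * x) := by rw [← Real.exp_add]; ring_nf
  have := mul_le_mul_of_nonneg_left htangent (hf x)
  linarith

theorem stmt_17_general (J : ℝ → ℝ) (hJnn : ∀ x, 0 ≤ J x)
    (hJexp : ∀ l : ℝ, 0 < l → Integrable (fun x => J x * Real.exp (l * x)))
    (s₀ : ℝ)
    (cstar lamstar : ℝ) (hcstar : 0 < cstar) (hlamstar : 0 < lamstar)
    (hroot : (∫ y, J y * Real.exp (lamstar * y) * y) = cstar)
    (hcrit : (∫ y, J y * Real.exp (lamstar * y)) - 1 - cstar * lamstar = s₀) :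
    0 < ⨅ lam : {l : ℝ // 0 < l},
        ((∫ y, J y * Real.exp ((lam : ℝ) * y)) - 1 + (-s₀)) / (lam : ℝ) ∧
    (⨅ lam : {l : ℝ // 0 < l},
        ((∫ y, J y * Real.exp ((lam : ℝ) * y)) - 1 + (-s₀)) / (lam : ℝ)) = cstar ∧
    ((∫ y, J y * Real.exp (lamstar * y)) - 1 + (-s₀)) / lamstar =
      ⨅ lam : {l : ℝ // 0 < l},
        ((∫ y, J y * Real.exp ((lam : ℝ) * y)) - 1 + (-s₀)) / (lam : ℝ) := by
  have hmoment : Integrable (fun y => J y * Real.exp (lamstar * y) * y) :=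
    integrable_mul_exp_mul_id (half_pos hlamstar) (hJexp _ (by linarith))
      (hJexp _ (by linarith))
  have hlower : ∀ l : ℝ, 0 < l → cstar ≤ ((∫ y, J y * Real.exp (l * y)) - 1 + (-s₀)) / l := by
    intro l hl
    have := tangent_le_integral_mul_exp hJnn (hJexp _ hlamstar) hmoment (hJexp _ hl)
    rw [hroot] at this
    rw [le_div_iff₀ hl]
    linarith
  have hattained : ((∫ y, J y * Real.exp (lamstar * y)) - 1 + (-s₀)) / lamstar = cstar := by
    rw [div_eq_iff hlamstar.ne']
    linarith
  have : Nonempty {l : ℝ // 0 < l} := ⟨⟨1, one_pos⟩⟩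
  have hinf : (⨅ lam : {l : ℝ // 0 < l},
      ((∫ y, J y * Real.exp ((lam : ℝ) * y)) - 1 + (-s₀)) / (lam : ℝ)) = cstar :=
    ciInf_eq_of_forall_ge_of_forall_gt_exists_lt (fun lam => hlower lam lam.2)
      fun w hw => ⟨⟨lamstar, hlamstar⟩, hattained.trans_lt hw⟩
  exact ⟨hinf ▸ hcstar, hinf, hattained.trans hinf.symm⟩

theorem stmt_17 (J : ℝ → ℝ) (hJc : Continuous J) (hJnn : ∀ x, 0 ≤ J x)
    (hJsym : ∀ x, J (-x) = J x) (hJint : ∫ x, J x = 1) (hJ0 : 0 < J 0)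
    (hJexp : ∀ l : ℝ, 0 < l → Integrable (fun x => J x * Real.exp (l * x)))
    (s₀ : ℝ) (hs₀ : s₀ < 0)
    (cstar lamstar : ℝ) (hcstar : 0 < cstar) (hlamstar : 0 < lamstar)
    (hroot : (∫ y, J y * Real.exp (lamstar * y) * y) = cstar)
    (hcrit : (∫ y, J y * Real.exp (lamstar * y)) - 1 - cstar * lamstar = s₀) :
    0 < ⨅ lam : {l : ℝ // 0 < l},
        ((∫ y, J y * Real.exp ((lam : ℝ) * y)) - 1 + (-s₀)) / (lam : ℝ) ∧
    (⨅ lam : {l : ℝ // 0 < l},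
        ((∫ y, J y * Real.exp ((lam : ℝ) * y)) - 1 + (-s₀)) / (lam : ℝ)) = cstar ∧
    ((∫ y, J y * Real.exp (lamstar * y)) - 1 + (-s₀)) / lamstar =
      ⨅ lam : {l : ℝ // 0 < l},
        ((∫ y, J y * Real.exp ((lam : ℝ) * y)) - 1 + (-s₀)) / (lam : ℝ) :=
  stmt_17_general J hJnn hJexp s₀ cstar lamstar hcstar hlamstar hroot hcrit
end
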